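/- arXiv:1702.08489 — 4 statements merged into one kernel-verified Lean document; each statement's English description precedes it below -/
import Mathlib

section
/- There exists a universal constant d₀ > 0 such that for all integers d ≥ d₀, all positive integers m, all nonnegative integers k with k ≤ m, and every real polynomial p of degree at most k: ∫_{−1}^{1} ( sin(π √d · m · x) − p(x) )² dμ_d(x) ≥ (m − k)/(4 e π m). -/
open MeasureTheory Real
open scoped RealInnerProductSpace

/-- The probability measure `μ_d` on `[-1,1]` with density
`Γ(d/2)/(√π Γ((d-1)/2)) (1-x²)^((d-3)/2)` w.r.t. Lebesgue measure. -/
noncomputable def muD (d : ℕ) : Measure ℝ :=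
  ((volume : Measure ℝ).restrict (Set.Icc (-1 : ℝ) 1)).withDensity fun x =>
    ENNReal.ofReal (Real.Gamma ((d : ℝ) / 2) / (Real.sqrt π * Real.Gamma (((d : ℝ) - 1) / 2)) *
      (1 - x ^ 2) ^ (((d : ℝ) - 3) / 2))

/-- `A_{n,d}(f)`: the best `L²(μ_d)` approximation error of `f` by polynomials
of degree at most `n-1`. -/
noncomputable def polyApproxErr (n d : ℕ) (f : ℝ → ℝ) : ℝ :=
  sInf {c | ∃ p : Polynomial ℝ, p.natDegree ≤ n - 1 ∧
    c = Real.sqrt (∫ x, (f x - p.eval x) ^ 2 ∂ muD d)}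

/-- `N_{d,n} = C(d+n-1, d-1) - C(d+n-3, d-1)`. -/
def NDN (d n : ℕ) : ℕ := (d + n - 1).choose (d - 1) - (d + n - 3).choose (d - 1)

/-- The unit sphere `S^{d-1} ⊆ ℝ^d`. -/
abbrev Sph (d : ℕ) := Metric.sphere (0 : EuclideanSpace ℝ (Fin d)) 1

/-- The uniform (rotation-invariant) probability measure on `S^{d-1}`. -/
noncomputable def uniformSphere (d : ℕ) : Measure (Sph d) :=
  ((volume : Measure (EuclideanSpace ℝ (Fin d))).toSphere Set.univ)⁻¹ •
    (volume : Measure (EuclideanSpace ℝ (Fin d))).toSphere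

/-- `N` is implemented by a depth-2 `σ`-network of width `r` with weights bounded by `B`:
`N(x,x') = w₂ᵀ σ(W₁ x + W₁' x' + b₁) + b₂`. -/
def IsDepth2Net (d r : ℕ) (B : ℝ) (σ : ℝ → ℝ) (N : Sph d → Sph d → ℝ) : Prop :=
  ∃ (W₁ W₁' : Matrix (Fin r) (Fin d) ℝ) (w₂ b₁ : Fin r → ℝ) (b₂ : ℝ),
    (∀ i j, |W₁ i j| ≤ B) ∧ (∀ i j, |W₁' i j| ≤ B) ∧ (∀ i, |w₂ i| ≤ B) ∧
    (∀ i, |b₁ i| ≤ B) ∧ |b₂| ≤ B ∧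
    ∀ x x' : Sph d, N x x' =
      (∑ i, w₂ i * σ ((∑ j, W₁ i j * (x : EuclideanSpace ℝ (Fin d)) j) +
        (∑ j, W₁' i j * (x' : EuclideanSpace ℝ (Fin d)) j) + b₁ i)) + b₂

/-!
On each crest `[(a + 1/4)/w, (a + 3/4)/w]` of `x ↦ sin (π w x)`, `w = √d m`, the sine has
modulus at least `1/√2` and sign `(-1)^a`. The `2m` crests inside `[-1/√d, 1/√d]` form `m`
consecutive pairs. A polynomial of degree at most `k` changes sign on at most `k` of these pairs;
on each of the other pairs it has, on one of the two crests, the sign opposite to the sine's, so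
that `(sin - p)² ≥ 1/2` there. On `[-1/√d, 1/√d]` the density of `μ_d` is at least `√d/(eπ)`:
the factor `(1 - x²)^((d-3)/2)` is at least `e^(-1/2)`, and log-convexity of `Γ` bounds the
normalising constant below by `√d/(π √e)`. Hence each of the at least `m - k` good pairs
contributes at least `1/(4eπm)` to the integral.
-/

open Set Function

namespace Real

theorem Gamma_add_half_sq_le {s : ℝ} (hs : 0 < s) : Gamma (s + 1 / 2) ^ 2 ≤ s * Gamma s ^ 2 := by
  have hconv := Gamma_mul_add_mul_le_rpow_Gamma_mul_rpow_Gamma hs (by linarith : 0 < s + 1)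
    one_half_pos one_half_pos (add_halves 1)
  rw [show 1 / 2 * s + 1 / 2 * (s + 1) = s + 1 / 2 by ring, Gamma_add_one hs.ne',
    ← sqrt_eq_rpow, ← sqrt_eq_rpow, ← sqrt_mul (Gamma_pos_of_pos hs).le] at hconv
  calc Gamma (s + 1 / 2) ^ 2 ≤ √(Gamma s * (s * Gamma s)) ^ 2 :=
        pow_le_pow_left₀ (Gamma_pos_of_pos (by linarith)).le hconv 2
    _ = s * Gamma s ^ 2 := by
        rw [sq_sqrt (by have := Gamma_pos_of_pos hs; positivity)]; ring

theorem half_le_sin_sq {x : ℝ} (hx : x ∈ Icc (π / 4) (3 * π / 4)) : 1 / 2 ≤ sin x ^ 2 := by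
  have : cos (2 * x) ≤ 0 :=
    cos_nonpos_of_pi_div_two_le_of_le (by linarith [hx.1]) (by linarith [hx.2])
  rw [sin_sq_eq_half_sub]
  linarith

theorem half_le_sq_sin_pi_mul_sub (n : ℤ) {t y : ℝ} (ht : t ∈ Icc (n + 1 / 4 : ℝ) (n + 3 / 4))
    (hy : (-1) ^ n * y ≤ 0) : 1 / 2 ≤ (sin (π * t) - y) ^ 2 := by
  set s := sin (π * (t - n))
  have hsin : sin (π * t) = (-1) ^ n * s := by rw [← sin_add_int_mul_pi]; ring_nf
  have hsq : ((-1 : ℝ) ^ n) ^ 2 = 1 := by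
    rw [sq, ← zpow_add₀ (by norm_num), Even.neg_one_zpow ⟨n, rfl⟩]
  have hmem : π * (t - n) ∈ Icc (π / 4) (3 * π / 4) := by
    constructor <;> nlinarith [pi_pos, ht.1, ht.2]
  have hs0 : 0 ≤ s := sin_nonneg_of_nonneg_of_le_pi (by linarith [hmem.1, pi_pos])
    (by linarith [hmem.2, pi_pos])
  calc 1 / 2 ≤ s ^ 2 := half_le_sin_sq hmem
    _ ≤ (s - (-1) ^ n * y) ^ 2 := by nlinarith
    _ = (sin (π * t) - y) ^ 2 := by rw [hsin]; linear_combination (y ^ 2 - s ^ 2) * hsq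

end Real

def SignChangesOn (f : ℝ → ℝ) (s : Set ℝ) : Prop :=
  ∃ a ∈ s, ∃ b ∈ s, f a < 0 ∧ 0 < f b

theorem Polynomial.card_le_natDegree_of_forall_sign_change {ι : Type*} (p : Polynomial ℝ)
    {s : Finset ι} {I : ι → Set ℝ} (hI : ∀ i ∈ s, IsPreconnected (I i))
    (hdisj : (s : Set ι).PairwiseDisjoint I)
    (hsign : ∀ i ∈ s, SignChangesOn p.eval (I i)) :
    s.card ≤ p.natDegree := by
  have hroot : ∀ i ∈ s, ∃ r ∈ I i, p.IsRoot r := by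
    intro i hi
    obtain ⟨a, ha, b, hb, hpa, hpb⟩ := hsign i hi
    exact (hI i hi).intermediate_value ha hb p.continuous.continuousOn ⟨hpa.le, hpb.le⟩
  choose! r hrI hr using hroot
  rcases s.eq_empty_or_nonempty with rfl | ⟨i, hi⟩
  · simp
  have hp : p ≠ 0 := by
    rintro rfl
    obtain ⟨a, -, b, -, hpa, hpb⟩ := hsign i hi
    simp at hpa
  calc s.card ≤ p.roots.toFinset.card :=
        Finset.card_le_card_of_injOn r (fun i hi => by simpa [hp] using hr i hi)
          fun i hi j hj hij => hdisj.elim hi hj (not_disjoint_iff.2 ⟨r i, hrI i hi, hij ▸ hrI j hj⟩)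
    _ ≤ Multiset.card p.roots := Multiset.toFinset_card_le _
    _ ≤ p.natDegree := p.card_roots'

theorem card_mul_le_integral_of_le_setIntegral {X ι : Type*} [MeasurableSpace X] {μ : Measure X}
    {f : X → ℝ} (hf : Integrable f μ) (hf0 : 0 ≤ f) {s : Finset ι} {I : ι → Set X}
    (hI : ∀ i ∈ s, MeasurableSet (I i)) (hdisj : (s : Set ι).PairwiseDisjoint I) {b : ℝ}
    (hb : ∀ i ∈ s, b ≤ ∫ x in I i, f x ∂μ) :
    s.card * b ≤ ∫ x, f x ∂μ :=
  calc s.card * b = ∑ _ ∈ s, b := by rw [Finset.sum_const, nsmul_eq_mul]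
    _ ≤ ∑ i ∈ s, ∫ x in I i, f x ∂μ := Finset.sum_le_sum hb
    _ = ∫ x in ⋃ i ∈ s, I i, f x ∂μ :=
        (integral_biUnion_finset s hI hdisj fun _ _ => hf.integrableOn).symm
    _ ≤ ∫ x, f x ∂μ := setIntegral_le_integral hf (Filter.Eventually.of_forall hf0)

section MuD

noncomputable def muDConst (d : ℕ) : ℝ :=
  Gamma ((d : ℝ) / 2) / (√π * Gamma (((d : ℝ) - 1) / 2))

noncomputable def muDDensity (d : ℕ) (x : ℝ) : ℝ :=
  muDConst d * (1 - x ^ 2) ^ (((d : ℝ) - 3) / 2)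

theorem muD_eq_withDensity (d : ℕ) :
    muD d = (volume.restrict (Icc (-1 : ℝ) 1)).withDensity
      fun x => ENNReal.ofReal (muDDensity d x) := rfl

variable {d : ℕ}

theorem muDConst_pos (hd : 2 ≤ d) : 0 < muDConst d := by
  have hd' : (2 : ℝ) ≤ d := by exact_mod_cast hd
  unfold muDConst
  have := Gamma_pos_of_pos (by linarith : (0 : ℝ) < d / 2)
  have := Gamma_pos_of_pos (by linarith : (0 : ℝ) < (d - 1) / 2)
  positivity

theorem sq_le_sq_muDConst (hd : 2 ≤ d) :
    ((d : ℝ) - 1) ^ 2 / (2 * π * d) ≤ muDConst d ^ 2 := by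
  have hd' : (2 : ℝ) ≤ d := by exact_mod_cast hd
  have hG := Gamma_pos_of_pos (by linarith : (0 : ℝ) < (d - 1) / 2)
  have hΓ := Gamma_add_half_sq_le (by linarith : (0 : ℝ) < d / 2)
  rw [show (d : ℝ) / 2 + 1 / 2 = (d - 1) / 2 + 1 by ring, Gamma_add_one (by linarith)] at hΓ
  rw [muDConst, div_pow, mul_pow, sq_sqrt pi_pos.le,
    div_le_div_iff₀ (by positivity) (by positivity)]
  nlinarith [pi_pos]

theorem sqrt_div_le_muDConst (hd : 3 ≤ d) : √d / (π * exp (1 / 2)) ≤ muDConst d := by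
  have hd' : (3 : ℝ) ≤ d := by exact_mod_cast hd
  have hC := sq_le_sq_muDConst (by omega : 2 ≤ d)
  have he : 2 ≤ exp 1 := by linarith [add_one_le_exp (1 : ℝ)]
  have he2 : exp (1 / 2) ^ 2 = exp 1 := by rw [← exp_nat_mul]; norm_num
  have hpe : 2 * (d : ℝ) ^ 2 ≤ π * exp 1 * (d - 1) ^ 2 := by
    have : 6 ≤ π * exp 1 := by nlinarith [pi_gt_three]
    nlinarith
  rw [← pow_le_pow_iff_left₀ (by positivity) (muDConst_pos (by omega)).le two_ne_zero]
  refine le_trans ?_ hC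
  rw [div_pow, mul_pow, sq_sqrt (by positivity), he2,
    div_le_div_iff₀ (by positivity) (by positivity)]
  nlinarith [mul_le_mul_of_nonneg_left hpe pi_pos.le]

theorem exp_neg_half_le_one_sub_sq_rpow (hd : 3 ≤ d) {x : ℝ} (hx : x ^ 2 ≤ 1 / d) :
    exp (-(1 / 2)) ≤ (1 - x ^ 2) ^ (((d : ℝ) - 3) / 2) := by
  have hd' : (3 : ℝ) ≤ d := by exact_mod_cast hd
  have hpos : 0 < 1 - 1 / (d : ℝ) := by
    rw [sub_pos, div_lt_one (by linarith)]; linarith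
  have hlog : -(1 / ((d : ℝ) - 1)) ≤ log (1 - 1 / d) := by
    convert one_sub_inv_le_log_of_pos hpos using 1
    have : (d : ℝ) - 1 ≠ 0 := by linarith
    field_simp
    ring
  have hexponent : -(1 / 2) ≤ log (1 - 1 / d) * (((d : ℝ) - 3) / 2) := by
    refine le_trans ?_ (mul_le_mul_of_nonneg_right hlog (by linarith))
    rw [neg_mul, neg_le_neg_iff, div_mul_div_comm, one_mul, div_le_div_iff₀ (by nlinarith) two_pos]
    linarith
  calc exp (-(1 / 2)) ≤ (1 - 1 / (d : ℝ)) ^ (((d : ℝ) - 3) / 2) := by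
        rw [rpow_def_of_pos hpos]; exact exp_le_exp.2 hexponent
    _ ≤ (1 - x ^ 2) ^ (((d : ℝ) - 3) / 2) :=
        rpow_le_rpow hpos.le (by linarith) (by linarith)

theorem sqrt_div_le_muDDensity (hd : 3 ≤ d) {x : ℝ} (hx : x ∈ Icc (-(√d)⁻¹) (√d)⁻¹) :
    √d / (π * exp 1) ≤ muDDensity d x := by
  have hx2 : x ^ 2 ≤ 1 / d := by
    simpa [inv_pow, sq_sqrt (Nat.cast_nonneg d)] using sq_le_sq' hx.1 hx.2
  have he : exp 1 = exp (1 / 2) * exp (1 / 2) := by rw [← exp_add]; norm_num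
  calc √d / (π * exp 1) = √d / (π * exp (1 / 2)) * exp (-(1 / 2)) := by
        rw [exp_neg, he]; field_simp
    _ ≤ muDDensity d x :=
        mul_le_mul (sqrt_div_le_muDConst hd) (exp_neg_half_le_one_sub_sq_rpow hd hx2)
          (exp_pos _).le (muDConst_pos (by omega)).le

theorem muDDensity_le_muDConst (hd : 3 ≤ d) {x : ℝ} (hx : x ∈ Icc (-1 : ℝ) 1) :
    muDDensity d x ≤ muDConst d := by
  have hd' : (3 : ℝ) ≤ d := by exact_mod_cast hd
  have hx2 : x ^ 2 ≤ 1 := by simpa using sq_le_sq' hx.1 hx.2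
  refine mul_le_of_le_one_right (muDConst_pos (by omega)).le ?_
  exact rpow_le_one (by linarith) (by linarith [sq_nonneg x]) (by linarith)

theorem muD_le_smul_restrict (hd : 3 ≤ d) :
    muD d ≤ ENNReal.ofReal (muDConst d) • volume.restrict (Icc (-1 : ℝ) 1) := by
  rw [muD_eq_withDensity, ← withDensity_const]
  exact withDensity_mono <| ae_restrict_of_forall_mem measurableSet_Icc fun x hx =>
    ENNReal.ofReal_le_ofReal (muDDensity_le_muDConst hd hx)

theorem isFiniteMeasure_muD (hd : 3 ≤ d) : IsFiniteMeasure (muD d) :=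
  have := (volume.restrict (Icc (-1 : ℝ) 1)).smul_finite (ENNReal.ofReal_ne_top (r := muDConst d))
  isFiniteMeasure_of_le _ (muD_le_smul_restrict hd)

theorem Continuous.integrable_muD {f : ℝ → ℝ} (hf : Continuous f) (hd : 3 ≤ d) :
    Integrable f (muD d) :=
  (hf.integrableOn_Icc.smul_measure ENNReal.ofReal_ne_top).mono_measure
    (muD_le_smul_restrict hd)

theorem sqrt_div_mul_le_muD_real (hd : 3 ≤ d) {A : Set ℝ} (hA : MeasurableSet A)
    (hAd : A ⊆ Icc (-(√d)⁻¹) (√d)⁻¹) :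
    √d / (π * exp 1) * volume.real A ≤ (muD d).real A := by
  have : IsFiniteMeasure (muD d) := isFiniteMeasure_muD hd
  have hd1 : (√d)⁻¹ ≤ 1 := inv_le_one_of_one_le₀ (one_le_sqrt.2 (by norm_cast; omega))
  have hA1 : A ⊆ Icc (-1) 1 := hAd.trans (Icc_subset_Icc (by linarith) hd1)
  have hle : ENNReal.ofReal (√d / (π * exp 1)) * volume A ≤ muD d A := by
    rw [muD_eq_withDensity, withDensity_apply _ hA, Measure.restrict_restrict hA,
      inter_eq_left.2 hA1, ← setLIntegral_const]
    exact setLIntegral_mono' hA fun x hx =>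
      ENNReal.ofReal_le_ofReal (sqrt_div_le_muDDensity hd (hAd hx))
  have := ENNReal.toReal_mono (measure_ne_top _ _) hle
  rwa [ENNReal.toReal_mul, ENNReal.toReal_ofReal (by positivity)] at this

end MuD

/-- Two consecutive crests `[(n + 1/4)/w, (n + 3/4)/w]`, `[(n + 5/4)/w, (n + 7/4)/w]` of
`x ↦ sin (π w x)`: on each the sine has modulus at least `1/√2`, with opposite signs. -/
def crestPair (w : ℝ) (n : ℤ) : Set ℝ := Icc ((n + 1 / 4) / w) ((n + 7 / 4) / w)

theorem crestPair_disjoint {w : ℝ} (hw : 0 < w) {n n' : ℤ} (h : n + 2 ≤ n') :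
    Disjoint (crestPair w n) (crestPair w n') := by
  have h' : (n : ℝ) + 2 ≤ n' := by exact_mod_cast h
  refine disjoint_left.2 fun x hx hx' => ?_
  have : ((n : ℝ) + 7 / 4) / w < (n' + 1 / 4) / w := div_lt_div_of_pos_right (by linarith) hw
  linarith [hx.2, hx'.1]

theorem crestPair_subset_Icc {w M : ℝ} (hw : 0 < w) {n : ℤ} (h₁ : -M ≤ n) (h₂ : n + 2 ≤ M) :
    crestPair w n ⊆ Icc (-M / w) (M / w) :=
  Icc_subset_Icc (div_le_div_of_nonneg_right (by linarith) hw.le)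
    (div_le_div_of_nonneg_right (by linarith) hw.le)

theorem exists_forall_half_le_sq_sin_sub {w : ℝ} (hw : 0 < w) (n : ℤ) {f : ℝ → ℝ}
    (hf : ¬SignChangesOn f (crestPair w n)) :
    ∃ a : ℤ, Icc ((a + 1 / 4) / w) ((a + 3 / 4) / w) ⊆ crestPair w n ∧
      ∀ x ∈ Icc ((a + 1 / 4) / w) ((a + 3 / 4) / w), 1 / 2 ≤ (sin (π * w * x) - f x) ^ 2 := by
  have hsub : ∀ a : ℤ, a = n ∨ a = n + 1 →
      Icc ((a + 1 / 4) / w) ((a + 3 / 4) / w) ⊆ crestPair w n := by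
    rintro a (rfl | rfl) <;> apply Icc_subset_Icc <;>
      refine div_le_div_of_nonneg_right ?_ hw.le <;> push_cast <;> linarith
  have hsign : ∃ a : ℤ, (a = n ∨ a = n + 1) ∧
      ∀ x ∈ crestPair w n, (-1 : ℝ) ^ a * f x ≤ 0 := by
    have hsucc : (-1 : ℝ) ^ (n + 1) = -(-1) ^ n := by rw [zpow_add_one₀ (by norm_num)]; ring
    have hf : (∀ x ∈ crestPair w n, 0 ≤ f x) ∨ (∀ x ∈ crestPair w n, f x ≤ 0) := by
      by_contra! h
      obtain ⟨⟨a, ha, hfa⟩, ⟨b, hb, hfb⟩⟩ := h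
      exact hf ⟨a, ha, b, hb, hfa, hfb⟩
    rcases hf with hf | hf <;> rcases Int.even_or_odd n with hn | hn
    · exact ⟨n + 1, .inr rfl, fun x hx => by rw [hsucc, hn.neg_one_zpow]; linarith [hf x hx]⟩
    · exact ⟨n, .inl rfl, fun x hx => by rw [hn.neg_one_zpow]; linarith [hf x hx]⟩
    · exact ⟨n, .inl rfl, fun x hx => by rw [hn.neg_one_zpow]; linarith [hf x hx]⟩
    · exact ⟨n + 1, .inr rfl, fun x hx => by rw [hsucc, hn.neg_one_zpow]; linarith [hf x hx]⟩
  obtain ⟨a, ha, hsign⟩ := hsign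
  refine ⟨a, hsub a ha, fun x hx => ?_⟩
  have hwx : w * x ∈ Icc (a + 1 / 4 : ℝ) (a + 3 / 4) :=
    ⟨(div_le_iff₀' hw).1 hx.1, (le_div_iff₀' hw).1 hx.2⟩
  rw [mul_assoc]
  exact half_le_sq_sin_pi_mul_sub a hwx (hsign x (hsub a ha hx))

theorem inv_le_setIntegral_crestPair {d m : ℕ} (hd : 3 ≤ d) (hm : 0 < m) {f : ℝ → ℝ}
    (hf : Continuous f) {n : ℤ} (h₁ : -(m : ℤ) ≤ n) (h₂ : n + 2 ≤ m)
    (hsign : ¬SignChangesOn f (crestPair (√d * m) n)) :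
    1 / (4 * exp 1 * π * m) ≤
      ∫ x in crestPair (√d * m) n, (sin (π * (√d * m) * x) - f x) ^ 2 ∂muD d := by
  have : IsFiniteMeasure (muD d) := isFiniteMeasure_muD hd
  have hsd : 0 < √(d : ℝ) := sqrt_pos.2 (by norm_cast; omega)
  have hw : 0 < √d * m := by positivity
  have hint : Integrable (fun x => (sin (π * (√d * m) * x) - f x) ^ 2) (muD d) :=
    Continuous.integrable_muD (by fun_prop) hd
  have hbulk : crestPair (√d * m) n ⊆ Icc (-(√d)⁻¹) (√d)⁻¹ := by
    have hmw : (m : ℝ) / (√d * m) = (√d)⁻¹ := by field_simp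
    simpa only [neg_div, hmw] using
      crestPair_subset_Icc hw (M := m) (by exact_mod_cast h₁) (by exact_mod_cast h₂)
  obtain ⟨a, hsub, hcrest⟩ := exists_forall_half_le_sq_sin_sub hw n hsign
  calc 1 / (4 * exp 1 * π * m)
      = 1 / 2 * (√d / (π * exp 1) *
          volume.real (Icc ((a + 1 / 4) / (√d * m)) ((a + 3 / 4) / (√d * m)))) := by
        rw [volume_real_Icc_of_le (by gcongr; norm_num)]
        field_simp
        ring
    _ ≤ 1 / 2 * (muD d).real (Icc ((a + 1 / 4) / (√d * m)) ((a + 3 / 4) / (√d * m))) := by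
        gcongr
        exact sqrt_div_mul_le_muD_real hd measurableSet_Icc (hsub.trans hbulk)
    _ ≤ _ := setIntegral_ge_of_const_le_real measurableSet_Icc (measure_ne_top _ _) hcrest
          hint.integrableOn
    _ ≤ _ := setIntegral_mono_set hint.integrableOn (ae_of_all _ fun _ => sq_nonneg _)
          hsub.eventuallyLE

/-- For large enough `d`, the function `x ↦ sin(π √d m x)` is far (in
`L²(μ_d)`) from every polynomial of degree at most `k ≤ m`. -/
theorem sine_far_from_polynomials_muD :
    ∃ d₀ : ℕ, 0 < d₀ ∧ ∀ d : ℕ, d₀ ≤ d → ∀ m k : ℕ, 0 < m → k ≤ m →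
      ∀ p : Polynomial ℝ, p.natDegree ≤ k →
        (∫ x, (Real.sin (π * Real.sqrt d * m * x) - p.eval x) ^ 2 ∂ muD d) ≥
          ((m : ℝ) - k) / (4 * Real.exp 1 * π * m) := by
  classical
  refine ⟨3, by norm_num, fun d hd m k hm hk p hp => ?_⟩
  have hw : 0 < √d * m := mul_pos (sqrt_pos.2 (by norm_cast; omega)) (by exact_mod_cast hm)
  let H : ℕ → Set ℝ := fun j => crestPair (√d * m) (2 * j - m)
  have hdisj : Pairwise (Disjoint on H) :=
    (pairwise_disjoint_on H).2 fun i j hij => crestPair_disjoint hw (by omega)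
  have hbad : ((Finset.range m).filter fun j => SignChangesOn p.eval (H j)).card ≤ k :=
    (p.card_le_natDegree_of_forall_sign_change (fun _ _ => isPreconnected_Icc)
      (hdisj.set_pairwise _) fun j hj => (Finset.mem_filter.1 hj).2).trans hp
  have hsplit := Finset.card_filter_add_card_filter_not (s := Finset.range m)
    fun j => SignChangesOn p.eval (H j)
  set good := (Finset.range m).filter fun j => ¬SignChangesOn p.eval (H j)
  have hgood : m - k ≤ good.card := by
    rw [Finset.card_range] at hsplit
    omega
  have hint : Integrable (fun x => (sin (π * (√d * m) * x) - p.eval x) ^ 2) (muD d) :=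
    Continuous.integrable_muD (by have := p.continuous; fun_prop) hd
  calc ((m : ℝ) - k) / (4 * exp 1 * π * m) = ((m - k : ℕ) : ℝ) * (1 / (4 * exp 1 * π * m)) := by
        rw [Nat.cast_sub hk]; ring
    _ ≤ good.card * (1 / (4 * exp 1 * π * m)) := by gcongr
    _ ≤ ∫ x, (sin (π * (√d * m) * x) - p.eval x) ^ 2 ∂muD d :=
        card_mul_le_integral_of_le_setIntegral hint (fun _ => sq_nonneg _)
          (fun _ _ => measurableSet_Icc) (hdisj.set_pairwise _) fun j hj =>
          have hjm := Finset.mem_range.1 (Finset.mem_filter.1 hj).1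
          inv_le_setIntegral_crestPair hd hm p.continuous (by omega) (by omega)
            (Finset.mem_filter.1 hj).2
    _ = _ := by simp only [mul_assoc]
end

section
/- Let σ(x) = max(0,x) be the ReLU activation, let R, L, ε > 0, and let f : [−R,R] → ℝ be L-Lipschitz. Then there exist an integer m ≤ 2RL/ε and coefficients α_i with |α_i| ≤ 2L, β_i with |β_i| ≤ R, and γ_i ∈ {−1,1} (i = 1,…,m) such that the function g(x) = f(0) + Σ_{i=1}^m α_i σ(γ_i x − β_i) satisfies |g(x) − f(x)| ≤ ε for all x ∈ [−R,R], and moreover g is L-Lipschitz on all of ℝ. -/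
/-!
With mesh `δ = R / n`, the piecewise-linear interpolant of `f` at the nodes `j δ` of `[0, R]` is
`f 0 + ∑ j < n, (s j - s (j - 1)) σ(x - j δ)`, where `s j` is the slope of `f` on the `j`-th cell.
On each cell it is the secant of an `L`-Lipschitz function, so it is `L δ / 2`-close to `f`.
Abel summation rewrites the sum as `∑ j, s j (σ(x - j δ) - σ(x - (j + 1) δ))` plus a last ramp;
these pieces are monotone and telescope to `σ x`, so, as `|s j| ≤ L`, the sum moves by at most
`L (σ y - σ x)` between `x ≤ y`. Doing the same for `x ↦ f (-x)` with the ramps `σ(-x - j δ)` and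
adding the two halves gives an `L`-Lipschitz network with `2 n` neurons; `n = ⌊L R / ε⌋` makes
both the neuron count and the error fit, and when `n = 0` the constant `f 0` already does.
-/

open Finset Set NNReal

theorem max_zero_sub_max_zero_neg (t : ℝ) : max 0 t - max 0 (-t) = t := by
  rcases le_total 0 t with ht | ht <;> simp [ht]

theorem monotone_max_zero_sub_max_zero_sub {δ : ℝ} (hδ : 0 ≤ δ) :
    Monotone fun t : ℝ => max 0 t - max 0 (t - δ) := by
  intro t u htu
  simp only [max_def]
  split_ifs <;> linarith

theorem abs_sum_mul_sub_le_of_le {ι : Type*} (S : Finset ι) {w : ι → ℝ} {L : ℝ}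
    {u v : ι → ℝ} (hw : ∀ i ∈ S, |w i| ≤ L) (huv : ∀ i ∈ S, u i ≤ v i) :
    |∑ i ∈ S, w i * (v i - u i)| ≤ L * ∑ i ∈ S, (v i - u i) := by
  rw [mul_sum]
  refine (abs_sum_le_sum_abs _ _).trans (sum_le_sum fun i hi => ?_)
  rw [abs_mul, abs_of_nonneg (sub_nonneg.2 (huv i hi))]
  exact mul_le_mul_of_nonneg_right (hw i hi) (sub_nonneg.2 (huv i hi))

theorem abs_secant_sub_le {h : ℝ → ℝ} {K : ℝ≥0} {a b x : ℝ} (hab : a < b)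
    (hh : LipschitzOnWith K h (Icc a b)) (hx : x ∈ Icc a b) :
    |h a + (h b - h a) / (b - a) * (x - a) - h x| ≤ K * (b - a) / 2 := by
  obtain ⟨hax, hxb⟩ := hx
  have ha : |h a - h x| ≤ K * (x - a) := by
    simpa [Real.dist_eq, abs_of_nonpos (sub_nonpos.2 hax)] using
      hh.dist_le_mul a ⟨le_rfl, hab.le⟩ x ⟨hax, hxb⟩
  have hb : |h b - h x| ≤ K * (b - x) := by
    simpa [Real.dist_eq, abs_of_nonneg (sub_nonneg.2 hxb)] using
      hh.dist_le_mul b ⟨hab.le, le_rfl⟩ x ⟨hax, hxb⟩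
  have hba : 0 < b - a := sub_pos.2 hab
  calc |h a + (h b - h a) / (b - a) * (x - a) - h x|
      = |(b - x) * (h a - h x) + (x - a) * (h b - h x)| / (b - a) := by
        rw [eq_div_iff hba.ne', ← abs_of_pos hba, ← abs_mul, abs_of_pos hba]
        congr 1
        field_simp
        ring
    _ ≤ ((b - x) * (K * (x - a)) + (x - a) * (K * (b - x))) / (b - a) := by
        gcongr
        refine (abs_add_le _ _).trans (add_le_add ?_ ?_) <;>
          rw [abs_mul, abs_of_nonneg (by linarith)] <;> gcongr
    _ ≤ K * (b - a) / 2 := by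
        rw [div_le_iff₀ hba]
        nlinarith [mul_nonneg K.2 (sq_nonneg (2 * x - a - b))]

theorem exists_grid_cell {δ x : ℝ} (hδ : 0 < δ) {n : ℕ} (hn : 0 < n) (hx : x ∈ Icc 0 (n * δ)) :
    ∃ k < n, k * δ ≤ x ∧ x ≤ (k + 1) * δ := by
  obtain hlt | hle := lt_or_ge ⌊x / δ⌋₊ n
  · exact ⟨_, hlt, (le_div_iff₀ hδ).1 (Nat.floor_le (div_nonneg hx.1 hδ.le)),
      ((div_lt_iff₀ hδ).1 (Nat.lt_floor_add_one _)).le⟩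
  · have : (n : ℝ) ≤ x / δ := (Nat.cast_le.2 hle).trans (Nat.floor_le (div_nonneg hx.1 hδ.le))
    refine ⟨n - 1, Nat.sub_one_lt hn.ne', ?_, ?_⟩ <;> rw [Nat.cast_pred hn]
    · nlinarith [(le_div_iff₀ hδ).1 this]
    · linarith [hx.2]

theorem lipschitzWith_add_comp_neg {P Q : ℝ → ℝ} {K : ℝ≥0}
    (hP : ∀ x y, x ≤ y → |P y - P x| ≤ K * (max 0 y - max 0 x))
    (hQ : ∀ x y, x ≤ y → |Q y - Q x| ≤ K * (max 0 y - max 0 x)) :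
    LipschitzWith K fun x => P x + Q (-x) := by
  refine LipschitzWith.of_dist_le_mul fun x y => ?_
  wlog hxy : y ≤ x generalizing x y
  · rw [dist_comm, dist_comm x]
    exact this y x (le_of_not_ge hxy)
  rw [Real.dist_eq, Real.dist_eq, abs_of_nonneg (sub_nonneg.2 hxy)]
  calc |P x + Q (-x) - (P y + Q (-y))| ≤ |P x - P y| + |Q (-y) - Q (-x)| := by
        rw [abs_sub_comm (Q (-y))]
        exact (abs_add_le _ _).trans_eq' (by ring_nf)
    _ ≤ K * (max 0 x - max 0 y) + K * (max 0 (-y) - max 0 (-x)) :=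
        add_le_add (hP y x hxy) (hQ _ _ (neg_le_neg hxy))
    _ = K * (x - y) := by
        linear_combination (K : ℝ) * (max_zero_sub_max_zero_neg x - max_zero_sub_max_zero_neg y)

theorem sum_append_mul_max_zero {m n : ℕ} (a b c : Fin m → ℝ) (a' b' c' : Fin n → ℝ) (x : ℝ) :
    ∑ i, Fin.append a a' i * max 0 (Fin.append c c' i * x - Fin.append b b' i) =
      ∑ i, a i * max 0 (c i * x - b i) + ∑ i, a' i * max 0 (c' i * x - b' i) := by
  simp [Fin.sum_univ_add]

noncomputable section

def gridSlope (h : ℝ → ℝ) (δ : ℝ) (j : ℕ) : ℝ :=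
  (h ((j + 1) * δ) - h (j * δ)) / δ

def slopeJump (s : ℕ → ℝ) : ℕ → ℝ
  | 0 => s 0
  | j + 1 => s (j + 1) - s j

def reluGridSum (c : ℕ → ℝ) (δ : ℝ) (n : ℕ) (x : ℝ) : ℝ :=
  ∑ j ∈ range n, c j * max 0 (x - j * δ)

end

section ReluGridSum

variable (c s : ℕ → ℝ) {δ x : ℝ} (n : ℕ)

theorem reluGridSum_of_nonpos (hδ : 0 ≤ δ) (hx : x ≤ 0) : reluGridSum c δ n x = 0 :=
  sum_eq_zero fun j _ => by
    rw [max_eq_left (by nlinarith [j.cast_nonneg (α := ℝ)]), mul_zero]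

theorem reluGridSum_eq_succ_of_le (hδ : 0 ≤ δ) {k : ℕ} (hk : k < n)
    (hx : x ≤ (k + 1) * δ) : reluGridSum c δ n x = reluGridSum c δ (k + 1) x := by
  refine (sum_subset (range_subset_range.2 hk) fun j _ hj => ?_).symm
  have : (k + 1 : ℝ) ≤ j := by exact_mod_cast not_lt.1 (mt mem_range.2 hj)
  rw [max_eq_left (by nlinarith), mul_zero]

theorem sum_slopeJump_mul (k : ℕ) :
    ∑ j ∈ range (k + 1), slopeJump s j * (x - j * δ) =
      δ * ∑ j ∈ range k, s j + s k * (x - k * δ) := by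
  induction k with
  | zero => simp [slopeJump]
  | succ k ih =>
    rw [sum_range_succ, ih, sum_range_succ]
    simp only [slopeJump]
    push_cast
    ring

theorem reluGridSum_slopeJump_of_le (hδ : 0 ≤ δ) {k : ℕ} (hx : k * δ ≤ x) :
    reluGridSum (slopeJump s) δ (k + 1) x = δ * ∑ j ∈ range k, s j + s k * (x - k * δ) := by
  rw [reluGridSum, ← sum_slopeJump_mul]
  refine sum_congr rfl fun j hj => ?_
  have : (j : ℝ) ≤ k := by exact_mod_cast mem_range_succ_iff.1 hj
  rw [max_eq_right (by nlinarith)]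

theorem reluGridSum_slopeJump_eq_sum_clamp :
    reluGridSum (slopeJump s) δ (n + 1) x =
      ∑ j ∈ range (n + 1), s j * (max 0 (x - j * δ) - max 0 (x - (j + 1) * δ)) +
        s n * max 0 (x - (n + 1) * δ) := by
  induction n with
  | zero => simp [reluGridSum, slopeJump]; ring
  | succ n ih =>
    rw [reluGridSum, sum_range_succ, ← reluGridSum, ih, sum_range_succ _ (n + 1)]
    simp only [slopeJump]
    push_cast
    ring

end ReluGridSum

theorem mul_sum_gridSlope (h : ℝ → ℝ) {δ : ℝ} (hδ : δ ≠ 0) (k : ℕ) :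
    δ * ∑ j ∈ range k, gridSlope h δ j = h (k * δ) - h 0 := by
  simp_rw [mul_sum, gridSlope, mul_div_cancel₀ _ hδ]
  simpa using sum_range_sub (fun j : ℕ => h (j * δ)) k

theorem abs_gridSlope_le {h : ℝ → ℝ} {K : ℝ≥0} {δ : ℝ} (hδ : 0 < δ) {n : ℕ}
    (hh : LipschitzOnWith K h (Icc 0 (n * δ))) {j : ℕ} (hj : j < n) : |gridSlope h δ j| ≤ K := by
  have hj' : (j + 1 : ℝ) ≤ n := by exact_mod_cast hj
  have := hh.dist_le_mul ((j + 1) * δ) ⟨by positivity, by gcongr⟩ (j * δ)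
    ⟨by positivity, by nlinarith⟩
  rw [Real.dist_eq, Real.dist_eq, show (j + 1) * δ - j * δ = δ by ring, abs_of_pos hδ] at this
  rwa [gridSlope, abs_div, abs_of_pos hδ, div_le_iff₀ hδ]

theorem abs_slopeJump_le {s : ℕ → ℝ} {L : ℝ} {n : ℕ} (hs : ∀ j < n, |s j| ≤ L) {j : ℕ}
    (hj : j < n) : |slopeJump s j| ≤ 2 * L := by
  cases j with
  | zero => exact (hs 0 hj).trans (by linarith [(abs_nonneg (s 0)).trans (hs 0 hj)])
  | succ j =>
    calc |s (j + 1) - s j| ≤ |s (j + 1)| + |s j| := abs_sub _ _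
      _ ≤ 2 * L := by linarith [hs _ hj, hs j (by omega)]

theorem abs_add_reluGridSum_sub_le {h : ℝ → ℝ} {K : ℝ≥0} {δ : ℝ} (hδ : 0 < δ) {n : ℕ}
    (hn : 0 < n) (hh : LipschitzOnWith K h (Icc 0 (n * δ))) {x : ℝ} (hx : x ∈ Icc 0 (n * δ)) :
    |h 0 + reluGridSum (slopeJump (gridSlope h δ)) δ n x - h x| ≤ K * δ / 2 := by
  obtain ⟨k, hk, hkx, hxk⟩ := exists_grid_cell hδ hn hx
  have hcell : Icc (k * δ) ((k + 1) * δ) ⊆ Icc 0 (n * δ) :=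
    Icc_subset_Icc (by positivity) (by gcongr; exact_mod_cast hk)
  have := abs_secant_sub_le (by linarith) (hh.mono hcell) ⟨hkx, hxk⟩
  rw [show (k + 1) * δ - k * δ = δ by ring] at this
  rw [reluGridSum_eq_succ_of_le _ _ hδ.le hk hxk, reluGridSum_slopeJump_of_le _ hδ.le hkx,
    mul_sum_gridSlope h hδ.ne']
  convert this using 2
  rw [gridSlope]
  ring

theorem abs_reluGridSum_slopeJump_sub_le {s : ℕ → ℝ} {δ L : ℝ} (hδ : 0 ≤ δ) {n : ℕ} (hn : 0 < n)
    (hs : ∀ j < n, |s j| ≤ L) {x y : ℝ} (hxy : x ≤ y) :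
    |reluGridSum (slopeJump s) δ n y - reluGridSum (slopeJump s) δ n x| ≤
      L * (max 0 y - max 0 x) := by
  obtain ⟨n, rfl⟩ := Nat.exists_eq_add_one_of_ne_zero hn.ne'
  set clamp : ℕ → ℝ → ℝ := fun j t => max 0 (t - j * δ) - max 0 (t - (j + 1) * δ)
  set top : ℝ → ℝ := fun t => max 0 (t - (n + 1) * δ)
  have hclamp : ∀ j ∈ range (n + 1), clamp j x ≤ clamp j y := fun j _ => by
    simpa [clamp, add_mul, sub_sub] using
      monotone_max_zero_sub_max_zero_sub hδ (by linarith : x - j * δ ≤ y - j * δ)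
  have htop : top x ≤ top y := max_le_max le_rfl (by linarith)
  have htele : ∀ t, ∑ j ∈ range (n + 1), clamp j t + top t = max 0 t := fun t => by
    have := sum_range_sub' (fun j : ℕ => max 0 (t - j * δ)) (n + 1)
    simp only [Nat.cast_zero, zero_mul, sub_zero, Nat.cast_add, Nat.cast_one] at this
    simp only [clamp, top]
    linarith
  rw [reluGridSum_slopeJump_eq_sum_clamp, reluGridSum_slopeJump_eq_sum_clamp, ← htele y, ← htele x]
  calc _ = |∑ j ∈ range (n + 1), s j * (clamp j y - clamp j x) + s n * (top y - top x)| := by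
        congr 1
        simp only [clamp, top, mul_sub, sum_sub_distrib]
        ring
    _ ≤ L * ∑ j ∈ range (n + 1), (clamp j y - clamp j x) + L * (top y - top x) := by
        refine (abs_add_le _ _).trans (add_le_add (abs_sum_mul_sub_le_of_le _
          (fun j hj => hs j (mem_range.1 hj)) hclamp) ?_)
        rw [abs_mul, abs_of_nonneg (sub_nonneg.2 htop)]
        exact mul_le_mul_of_nonneg_right (hs n n.lt_succ_self) (sub_nonneg.2 htop)
    _ = _ := by
        rw [sum_sub_distrib]
        ring

theorem exists_relu_network_approx {f : ℝ → ℝ} {K : ℝ≥0} {δ : ℝ} (hδ : 0 < δ) {n : ℕ}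
    (hn : 0 < n) (hf : LipschitzOnWith K f (Icc (-(n * δ)) (n * δ))) :
    ∃ α β γ : Fin (n + n) → ℝ, (∀ i, |α i| ≤ 2 * K) ∧ (∀ i, |β i| ≤ n * δ) ∧
      (∀ i, γ i = -1 ∨ γ i = 1) ∧
      (∀ x ∈ Icc (-(n * δ)) (n * δ), |(f 0 + ∑ i, α i * max 0 (γ i * x - β i)) - f x| ≤ K * δ / 2) ∧
      LipschitzWith K fun x => f 0 + ∑ i, α i * max 0 (γ i * x - β i) := by
  have hnδ : 0 ≤ n * δ := by positivity
  set f' : ℝ → ℝ := fun t => f (-t)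
  have hR : LipschitzOnWith K f (Icc 0 (n * δ)) := hf.mono (Icc_subset_Icc (by linarith) le_rfl)
  have hL : LipschitzOnWith K f' (Icc 0 (n * δ)) :=
    LipschitzOnWith.of_dist_le_mul fun x hx y hy => by
      simpa [f', dist_neg_neg] using hf.dist_le_mul (-x) ⟨neg_le_neg hx.2, by linarith [hx.1]⟩
        (-y) ⟨neg_le_neg hy.2, by linarith [hy.1]⟩
  set P := reluGridSum (slopeJump (gridSlope f δ)) δ n
  set Q := reluGridSum (slopeJump (gridSlope f' δ)) δ n
  set α := Fin.append (fun j : Fin n => slopeJump (gridSlope f δ) j)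
    (fun j : Fin n => slopeJump (gridSlope f' δ) j)
  set β := Fin.append (fun j : Fin n => (j : ℝ) * δ) (fun j : Fin n => (j : ℝ) * δ)
  set γ : Fin (n + n) → ℝ := Fin.append 1 (-1)
  have hsum : ∀ x, ∑ i, α i * max 0 (γ i * x - β i) = P x + Q (-x) := fun x => by
    rw [sum_append_mul_max_zero]
    simp only [Pi.one_apply, Pi.neg_apply, one_mul, neg_one_mul, P, Q, reluGridSum]
    rw [← Fin.sum_univ_eq_sum_range (fun j => slopeJump (gridSlope f δ) j * max 0 (x - j * δ)),
      ← Fin.sum_univ_eq_sum_range (fun j => slopeJump (gridSlope f' δ) j * max 0 (-x - j * δ))]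
  refine ⟨α, β, γ, ?_, ?_, ?_, fun x hx => ?_, ?_⟩
  · simp only [α, Fin.forall_fin_add, Fin.append_left, Fin.append_right]
    exact ⟨fun j => abs_slopeJump_le (fun _ => abs_gridSlope_le hδ hR) j.2,
      fun j => abs_slopeJump_le (fun _ => abs_gridSlope_le hδ hL) j.2⟩
  · have hβ : ∀ j : Fin n, |(j : ℝ) * δ| ≤ n * δ := fun j => by
      rw [abs_of_nonneg (by positivity)]
      gcongr
      exact_mod_cast j.2.le
    simp only [β, Fin.forall_fin_add, Fin.append_left, Fin.append_right]
    exact ⟨hβ, hβ⟩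
  · simp only [γ, Fin.forall_fin_add, Fin.append_left, Fin.append_right, Pi.one_apply,
      Pi.neg_apply]
    simp
  · rw [hsum]
    rcases le_total 0 x with hx0 | hx0
    · rw [show Q (-x) = 0 from reluGridSum_of_nonpos _ _ hδ.le (neg_nonpos.2 hx0), add_zero]
      exact abs_add_reluGridSum_sub_le hδ hn hR ⟨hx0, hx.2⟩
    · rw [show P x = 0 from reluGridSum_of_nonpos _ _ hδ.le hx0, zero_add]
      simpa [f'] using abs_add_reluGridSum_sub_le hδ hn hL ⟨neg_nonneg.2 hx0, by linarith [hx.1]⟩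
  · have hPQ := lipschitzWith_add_comp_neg (P := P) (Q := Q)
      (fun _ _ => abs_reluGridSum_slopeJump_sub_le hδ.le hn fun _ => abs_gridSlope_le hδ hR)
      (fun _ _ => abs_reluGridSum_slopeJump_sub_le hδ.le hn fun _ => abs_gridSlope_le hδ hL)
    exact LipschitzWith.of_dist_le_mul fun x y => by
      simpa [hsum, Real.dist_eq] using hPQ.dist_le_mul x y

/-- Any `L`-Lipschitz function on `[-R,R]` can be `ε`-approximated by a
one-dimensional ReLU network `g(x) = f(0) + Σᵢ αᵢ max(0, γᵢ x - βᵢ)` with `m ≤ 2RL/ε`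
terms, `|αᵢ| ≤ 2L`, `|βᵢ| ≤ R`, `γᵢ ∈ {-1,1}`, and `g` is `L`-Lipschitz on all of `ℝ`. -/
theorem relu_approx_lipschitz_on_interval
    (R L ε : ℝ) (hR : 0 < R) (hL : 0 < L) (hε : 0 < ε) (f : ℝ → ℝ)
    (hf : ∀ x ∈ Set.Icc (-R) R, ∀ y ∈ Set.Icc (-R) R, |f x - f y| ≤ L * |x - y|) :
    ∃ (m : ℕ) (α β γ : Fin m → ℝ), (m : ℝ) ≤ 2 * R * L / ε ∧
      (∀ i, |α i| ≤ 2 * L) ∧ (∀ i, |β i| ≤ R) ∧ (∀ i, γ i = -1 ∨ γ i = 1) ∧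
      (∀ x ∈ Set.Icc (-R) R,
        |(f 0 + ∑ i, α i * max 0 (γ i * x - β i)) - f x| ≤ ε) ∧
      (∀ x y : ℝ,
        |(f 0 + ∑ i, α i * max 0 (γ i * x - β i)) -
          (f 0 + ∑ i, α i * max 0 (γ i * y - β i))| ≤ L * |x - y|) := by
  obtain hn | hn := Nat.eq_zero_or_pos ⌊L * R / ε⌋₊
  · have hLR : L * R < ε := by simpa [div_lt_one hε] using Nat.floor_eq_zero.1 hn
    refine ⟨0, ![], ![], ![], by rw [Nat.cast_zero]; positivity, by simp, by simp, by simp,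
      fun x hx => ?_, fun x y => by simpa using mul_nonneg hL.le (abs_nonneg (x - y))⟩
    have hx' : |0 - x| ≤ R := by simpa [abs_le, and_comm] using hx
    simpa using (hf 0 ⟨by linarith, hR.le⟩ x hx).trans (by nlinarith)
  lift L to ℝ≥0 using hL.le
  set n := ⌊L * R / ε⌋₊
  have hnR : n * (R / n) = R := mul_div_cancel₀ R (by positivity)
  have hf' : LipschitzOnWith L f (Icc (-(n * (R / n))) (n * (R / n))) :=
    LipschitzOnWith.of_dist_le_mul fun x hx y hy => by
      rw [hnR] at hx hy
      simpa [Real.dist_eq] using hf x hx y hy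
  obtain ⟨α, β, γ, hα, hβ, hγ, happrox, hlip⟩ :=
    exists_relu_network_approx (div_pos hR (by positivity)) hn hf'
  have hnle : (n : ℝ) ≤ L * R / ε := Nat.floor_le (by positivity)
  have hδ : L * (R / n) / 2 ≤ ε := by
    have := Nat.lt_floor_add_one (L * R / ε)
    rw [div_lt_iff₀ hε] at this
    rw [div_le_iff₀ two_pos, mul_div_assoc', div_le_iff₀ (by positivity)]
    nlinarith [(Nat.one_le_cast (α := ℝ)).2 hn]
  refine ⟨n + n, α, β, γ, ?_, hα, hnR ▸ hβ, hγ, fun x hx => ?_, fun x y => ?_⟩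
  · push_cast
    linarith [show 2 * R * L / ε = 2 * (L * R / ε) by ring]
  · exact (happrox x (hnR.symm ▸ hx)).trans hδ
  · simpa [Real.dist_eq] using hlip.dist_le_mul x y
end

section
/- Let d ≥ 2, let f : [−1,1] → [−1,1] be L-Lipschitz with L > 0, let ε > 0, and define F : S^{d−1} × S^{d−1} → ℝ by F(x,x') = f(⟨x,x'⟩). Then there exists a function G : S^{d−1} × S^{d−1} → ℝ implemented by a depth-3 ReLU network of width at most 16 d² L / ε with weights bounded by max(4, 2L), such that |F(x,x') − G(x,x')| ≤ ε for all x, x' ∈ S^{d−1}. -/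
open MeasureTheory Real
open scoped RealInnerProductSpace

/-- `G` is implemented by a depth-3 `σ`-network of width `r` with weights bounded by `B`:
`G(x,x') = w₃ᵀ σ(W₂ σ(W₁ x + W₁' x' + b₁) + b₂) + b₃`. -/
def IsDepth3Net (d r : ℕ) (B : ℝ) (σ : ℝ → ℝ) (G : Sph d → Sph d → ℝ) : Prop :=
  ∃ (W₁ W₁' : Matrix (Fin r) (Fin d) ℝ) (W₂ : Matrix (Fin r) (Fin r) ℝ)
    (w₃ b₁ b₂ : Fin r → ℝ) (b₃ : ℝ),
    (∀ i j, |W₁ i j| ≤ B) ∧ (∀ i j, |W₁' i j| ≤ B) ∧ (∀ i j, |W₂ i j| ≤ B) ∧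
    (∀ i, |w₃ i| ≤ B) ∧ (∀ i, |b₁ i| ≤ B) ∧ (∀ i, |b₂ i| ≤ B) ∧ |b₃| ≤ B ∧
    ∀ x x' : Sph d, G x x' =
      (∑ i, w₃ i * σ ((∑ j, W₂ i j * σ ((∑ k, W₁ j k * (x : EuclideanSpace ℝ (Fin d)) k) +
        (∑ k, W₁' j k * (x' : EuclideanSpace ℝ (Fin d)) k) + b₁ j)) + b₂ i)) + b₃

/-! The piecewise-linear interpolant of an `L`-Lipschitz function `g` at `n + 1` equally spaced
knots of `[a, b]` is `g a` plus a combination of `n` ReLUs whose weights, the jumps of the slope,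
are bounded by `2 L`; it lies within `L (b - a) / (2 n) + L |s - t|` of `g t`.
Interpolating `u ↦ u ^ 2` on `[0, 2]` at `u = |x_j + x'_j|`, with
`max 0 (|t| - c) = max 0 (t - c) + max 0 (-t - c)`, turns a first hidden layer of width `2 d m`
into an approximation of `⟪x, x'⟫ = (‖x + x'‖ ^ 2 - 2) / 2` with error `2 d / m`. A second
hidden layer of width `n` interpolates `f` on `[-1, 1]` at that value. For `m = ⌈4 d L / ε⌉` and
`n = ⌈2 L / ε⌉` both errors are at most `ε / 2`; when `L ≤ ε` a constant network suffices. -/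

open Finset

noncomputable def interpKnot (a b : ℝ) (n k : ℕ) : ℝ := a + k * ((b - a) / n)

noncomputable def interpSlope (g : ℝ → ℝ) (a b : ℝ) (n k : ℕ) : ℝ :=
  (g (interpKnot a b n (k + 1)) - g (interpKnot a b n k)) / ((b - a) / n)

noncomputable def interpWeight (g : ℝ → ℝ) (a b : ℝ) (n : ℕ) : ℕ → ℝ
  | 0 => interpSlope g a b n 0
  | k + 1 => interpSlope g a b n (k + 1) - interpSlope g a b n k

noncomputable def reluInterp (g : ℝ → ℝ) (a b : ℝ) (n : ℕ) (s : ℝ) : ℝ :=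
  g a + ∑ k ∈ range n, interpWeight g a b n k * max 0 (s - interpKnot a b n k)

lemma abs_one_sub_mul_add_mul_le {θ A B L h : ℝ} (hθ₀ : 0 ≤ θ) (hθ₁ : θ ≤ 1)
    (hA : |A| ≤ L * (θ * h)) (hB : |B| ≤ L * ((1 - θ) * h)) :
    |(1 - θ) * A + θ * B| ≤ L * h / 2 := by
  have hLh : 0 ≤ L * h := by nlinarith [abs_nonneg A, abs_nonneg B]
  calc |(1 - θ) * A + θ * B| ≤ (1 - θ) * |A| + θ * |B| := by
        refine (abs_add_le _ _).trans ?_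
        rw [abs_mul, abs_mul, abs_of_nonneg hθ₀, abs_of_nonneg (by linarith)]
    _ ≤ (1 - θ) * (L * (θ * h)) + θ * (L * ((1 - θ) * h)) := by gcongr
    _ ≤ L * h / 2 := by nlinarith [sq_nonneg (2 * θ - 1)]

section Interpolation

variable {g : ℝ → ℝ} {a b L : ℝ} {n : ℕ}

lemma interpKnot_zero : interpKnot a b n 0 = a := by simp [interpKnot]

lemma interpKnot_self (hn : 0 < n) : interpKnot a b n n = b := by
  have : (n : ℝ) ≠ 0 := Nat.cast_ne_zero.2 hn.ne'
  simp only [interpKnot]; field_simp; ring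

lemma interpKnot_succ_sub (k : ℕ) :
    interpKnot a b n (k + 1) - interpKnot a b n k = (b - a) / n := by
  simp only [interpKnot]; push_cast; ring

lemma interpKnot_mono (hab : a ≤ b) : Monotone (interpKnot a b n) := fun i j hij => by
  have : 0 ≤ (b - a) / n := div_nonneg (sub_nonneg.2 hab) n.cast_nonneg
  simp only [interpKnot]; gcongr

lemma interpKnot_mem (hab : a ≤ b) (hn : 0 < n) {k : ℕ} (hk : k ≤ n) :
    interpKnot a b n k ∈ Set.Icc a b := by
  have h₀ := interpKnot_mono (n := n) hab k.zero_le
  have h₁ := interpKnot_mono (n := n) hab hk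
  rw [interpKnot_zero] at h₀
  rw [interpKnot_self hn] at h₁
  exact ⟨h₀, h₁⟩

variable (hab : a < b) (hn : 0 < n)
include hab hn

lemma interpSlope_mul (k : ℕ) :
    interpSlope g a b n k * ((b - a) / n) =
      g (interpKnot a b n (k + 1)) - g (interpKnot a b n k) :=
  div_mul_cancel₀ _ (div_pos (sub_pos.2 hab) (Nat.cast_pos.2 hn)).ne'

lemma sum_interpWeight_mul_sub (s : ℝ) (j : ℕ) :
    ∑ k ∈ range (j + 1), interpWeight g a b n k * (s - interpKnot a b n k) =
      g (interpKnot a b n j) - g a + interpSlope g a b n j * (s - interpKnot a b n j) := by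
  induction j with
  | zero => simp [interpWeight, interpKnot_zero]
  | succ j ih =>
    have hΔ := interpSlope_mul (g := g) hab hn j
    rw [← interpKnot_succ_sub j] at hΔ
    rw [sum_range_succ, ih, interpWeight]
    linear_combination hΔ

lemma reluInterp_eq_of_bracket {s : ℝ} {j : ℕ} (hj : j < n) (hjs : interpKnot a b n j ≤ s)
    (hsk : ∀ k < n, j < k → s ≤ interpKnot a b n k) :
    reluInterp g a b n s =
      g (interpKnot a b n j) + interpSlope g a b n j * (s - interpKnot a b n j) := by
  have hhead : ∀ k ∈ range (j + 1), interpWeight g a b n k * max 0 (s - interpKnot a b n k) =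
      interpWeight g a b n k * (s - interpKnot a b n k) := fun k hk => by
    have hkj := interpKnot_mono (n := n) hab.le (Nat.lt_succ_iff.1 (mem_range.1 hk))
    rw [max_eq_right (sub_nonneg.2 (hkj.trans hjs))]
  have htail : ∀ k ∈ Ico (j + 1) n, interpWeight g a b n k * max 0 (s - interpKnot a b n k) = 0 :=
    fun k hk => by
      obtain ⟨hjk, hkn⟩ := mem_Ico.1 hk
      rw [max_eq_left (sub_nonpos.2 (hsk k hkn hjk)), mul_zero]
  rw [reluInterp, ← sum_range_add_sum_Ico _ hj, sum_congr rfl hhead, sum_eq_zero htail,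
    add_zero, sum_interpWeight_mul_sub hab hn]
  ring

lemma exists_interpKnot_bracket {s : ℝ} (hs : s ∈ Set.Icc a b) :
    ∃ j < n, interpKnot a b n j ≤ s ∧ s ≤ interpKnot a b n (j + 1) := by
  have hh : 0 < (b - a) / n := div_pos (sub_pos.2 hab) (Nat.cast_pos.2 hn)
  have hq : 0 ≤ (s - a) / ((b - a) / n) := div_nonneg (sub_nonneg.2 hs.1) hh.le
  refine ⟨min (n - 1) ⌊(s - a) / ((b - a) / n)⌋₊, by omega, ?_, ?_⟩
  · have hfl : ((min (n - 1) ⌊(s - a) / ((b - a) / n)⌋₊ : ℕ) : ℝ) ≤ (s - a) / ((b - a) / n) :=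
      (Nat.cast_le.2 (min_le_right _ _)).trans (Nat.floor_le hq)
    rw [le_div_iff₀ hh] at hfl
    rw [interpKnot]; linarith
  · rcases le_total (n - 1) ⌊(s - a) / ((b - a) / n)⌋₊ with hle | hle
    · rw [min_eq_left hle, Nat.sub_add_cancel hn, interpKnot_self hn]; exact hs.2
    · have hfl := Nat.lt_floor_add_one ((s - a) / ((b - a) / n))
      rw [div_lt_iff₀ hh] at hfl
      rw [min_eq_right hle, interpKnot]; push_cast; linarith

lemma reluInterp_of_le_left {s : ℝ} (hs : s ≤ a) : reluInterp g a b n s = g a := by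
  refine add_eq_left.2 (sum_eq_zero fun k hk => ?_)
  have := (interpKnot_mem hab.le hn (mem_range.1 hk).le).1
  rw [max_eq_left (by linarith), mul_zero]

lemma reluInterp_of_right_le {s : ℝ} (hs : b ≤ s) :
    reluInterp g a b n s = reluInterp g a b n b + interpSlope g a b n (n - 1) * (s - b) := by
  have hlast := Nat.sub_lt hn one_pos
  have hknot := (interpKnot_mem hab.le hn (Nat.sub_le n 1)).2
  rw [reluInterp_eq_of_bracket hab hn hlast (hknot.trans hs) fun k hk h => by omega,
    reluInterp_eq_of_bracket hab hn hlast hknot fun k hk h => by omega]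
  ring

variable (hg : ∀ x ∈ Set.Icc a b, ∀ y ∈ Set.Icc a b, |g x - g y| ≤ L * |x - y|)
include hg

lemma abs_interpSlope_le {k : ℕ} (hk : k < n) : |interpSlope g a b n k| ≤ L := by
  have hh : 0 < (b - a) / n := div_pos (sub_pos.2 hab) (Nat.cast_pos.2 hn)
  have := hg _ (interpKnot_mem hab.le hn hk) _ (interpKnot_mem hab.le hn hk.le)
  rw [interpKnot_succ_sub, abs_of_pos hh] at this
  rw [interpSlope, abs_div, abs_of_pos hh, div_le_iff₀ hh]
  exact this

lemma abs_interpWeight_le {k : ℕ} (hk : k < n) : |interpWeight g a b n k| ≤ 2 * L := by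
  cases k with
  | zero =>
    have := abs_interpSlope_le hab hn hg hk
    rw [interpWeight]; linarith [abs_nonneg (interpSlope g a b n 0)]
  | succ k =>
    rw [interpWeight]
    linarith [abs_sub (interpSlope g a b n (k + 1)) (interpSlope g a b n k),
      abs_interpSlope_le hab hn hg hk, abs_interpSlope_le hab hn hg (k.lt_succ_self.trans hk)]

lemma abs_reluInterp_sub_self_le {s : ℝ} (hs : s ∈ Set.Icc a b) :
    |reluInterp g a b n s - g s| ≤ L * ((b - a) / n) / 2 := by
  obtain ⟨j, hj, hjs, hsj⟩ := exists_interpKnot_bracket hab hn hs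
  have hh : 0 < (b - a) / n := div_pos (sub_pos.2 hab) (Nat.cast_pos.2 hn)
  have hgap := interpKnot_succ_sub (a := a) (b := b) (n := n) j
  have hmem := interpKnot_mem hab.le hn hj.le
  have hmem' : interpKnot a b n (j + 1) ∈ Set.Icc a b := interpKnot_mem hab.le hn hj
  set θ := (s - interpKnot a b n j) / ((b - a) / n)
  have hθ : s - interpKnot a b n j = θ * ((b - a) / n) := (div_mul_cancel₀ _ hh.ne').symm
  have hθ' : interpKnot a b n (j + 1) - s = (1 - θ) * ((b - a) / n) := by linarith
  rw [reluInterp_eq_of_bracket hab hn hj hjs fun k hk hjk =>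
    hsj.trans (interpKnot_mono hab.le hjk)]
  have key : g (interpKnot a b n j) + interpSlope g a b n j * (s - interpKnot a b n j) - g s =
      (1 - θ) * (g (interpKnot a b n j) - g s) + θ * (g (interpKnot a b n (j + 1)) - g s) := by
    rw [hθ, ← mul_assoc, mul_comm _ θ, mul_assoc, interpSlope_mul hab hn]; ring
  rw [key]
  refine abs_one_sub_mul_add_mul_le (div_nonneg (by linarith) hh.le)
    ((div_le_one hh).2 (by linarith)) ?_ ?_
  · have := hg _ hmem _ hs
    rwa [abs_sub_comm (interpKnot a b n j) s, abs_of_nonneg (sub_nonneg.2 hjs), hθ] at this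
  · have := hg _ hmem' _ hs
    rwa [abs_of_nonneg (sub_nonneg.2 hsj), hθ'] at this

lemma abs_reluInterp_sub_le (s : ℝ) {t : ℝ} (ht : t ∈ Set.Icc a b) :
    |reluInterp g a b n s - g t| ≤ L * ((b - a) / n) / 2 + L * |s - t| := by
  have hL : 0 ≤ L := (abs_nonneg _).trans (abs_interpSlope_le hab hn hg hn)
  have herr : 0 ≤ L * ((b - a) / n) / 2 :=
    div_nonneg (mul_nonneg hL (div_nonneg (by linarith) n.cast_nonneg)) zero_le_two
  have ha := Set.left_mem_Icc.2 hab.le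
  have hb := Set.right_mem_Icc.2 hab.le
  rcases lt_or_ge s a with hsa | has
  · have hat := hg a ha t ht
    rw [abs_sub_comm a t, abs_of_nonneg (sub_nonneg.2 ht.1)] at hat
    rw [reluInterp_of_le_left hab hn hsa.le, abs_of_neg (by linarith [ht.1] : s - t < 0)]
    nlinarith [mul_le_mul_of_nonneg_left (by linarith : t - a ≤ -(s - t)) hL]
  rcases le_or_gt s b with hsb | hbs
  · calc |reluInterp g a b n s - g t| ≤ |reluInterp g a b n s - g s| + |g s - g t| :=
          abs_sub_le _ _ _
      _ ≤ _ := add_le_add (abs_reluInterp_sub_self_le hab hn hg ⟨has, hsb⟩) (hg s ⟨has, hsb⟩ t ht)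
  · have hslope : |interpSlope g a b n (n - 1) * (s - b)| ≤ L * (s - b) := by
      rw [abs_mul, abs_of_pos (sub_pos.2 hbs)]
      exact mul_le_mul_of_nonneg_right (abs_interpSlope_le hab hn hg (Nat.sub_lt hn one_pos))
        (sub_pos.2 hbs).le
    have hbt := hg b hb t ht
    rw [abs_of_nonneg (by linarith [ht.2] : 0 ≤ b - t)] at hbt
    calc |reluInterp g a b n s - g t|
        = |interpSlope g a b n (n - 1) * (s - b) + (reluInterp g a b n b - g b) + (g b - g t)| := by
          rw [reluInterp_of_right_le hab hn hbs.le]; ring_nf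
      _ ≤ |interpSlope g a b n (n - 1) * (s - b)| + |reluInterp g a b n b - g b| + |g b - g t| :=
          abs_add_three _ _ _
      _ ≤ L * (s - b) + L * ((b - a) / n) / 2 + L * (b - t) :=
          add_le_add_three hslope (abs_reluInterp_sub_self_le hab hn hg hb) hbt
      _ = L * ((b - a) / n) / 2 + L * |s - t| := by
          rw [abs_of_pos (by linarith [ht.2] : 0 < s - t)]; ring

end Interpolation

lemma max_zero_abs_sub {c : ℝ} (hc : 0 ≤ c) (t : ℝ) :
    max 0 (|t| - c) = ∑ σ : Bool, max 0 ((if σ then t else -t) - c) := by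
  rw [Fintype.sum_bool, if_pos rfl, if_neg Bool.false_ne_true]
  rcases le_total 0 t with ht | ht
  · rw [abs_of_nonneg ht, max_eq_left (a := 0) (b := -t - c) (by linarith), add_zero]
  · rw [abs_of_nonpos ht, max_eq_left (a := 0) (b := t - c) (by linarith), zero_add]

lemma abs_sq_sub_sq_le {x y : ℝ} (hx : x ∈ Set.Icc (0 : ℝ) 2) (hy : y ∈ Set.Icc (0 : ℝ) 2) :
    |x ^ 2 - y ^ 2| ≤ 4 * |x - y| := by
  rw [sq_sub_sq, abs_mul, abs_of_nonneg (by linarith [hx.1, hy.1] : 0 ≤ x + y)]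
  exact mul_le_mul_of_nonneg_right (by linarith [hx.2, hy.2]) (abs_nonneg _)

noncomputable def sqApprox (m : ℕ) (t : ℝ) : ℝ := reluInterp (· ^ 2) 0 2 m |t|

lemma sqApprox_eq_sum (m : ℕ) (t : ℝ) :
    sqApprox m t = ∑ k ∈ range m, interpWeight (· ^ 2) 0 2 m k *
      ∑ σ : Bool, max 0 ((if σ then t else -t) - interpKnot 0 2 m k) := by
  rw [sqApprox, reluInterp, zero_pow two_ne_zero, zero_add]
  refine sum_congr rfl fun k _ => ?_
  rw [max_zero_abs_sub (by simp only [interpKnot]; positivity)]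

lemma abs_sqApprox_sub_sq_le {m : ℕ} (hm : 0 < m) {t : ℝ} (ht : |t| ≤ 2) :
    |sqApprox m t - t ^ 2| ≤ 4 / m := by
  have := abs_reluInterp_sub_le (g := (· ^ 2)) two_pos hm (fun x hx y hy => abs_sq_sub_sq_le hx hy)
    |t| ⟨abs_nonneg t, ht⟩
  rw [sub_self, abs_zero, mul_zero, add_zero, sq_abs] at this
  calc |sqApprox m t - t ^ 2| ≤ 4 * ((2 - 0) / m) / 2 := this
    _ = 4 / m := by ring

noncomputable def innerApprox {ι : Type*} [Fintype ι] (m : ℕ) (x x' : EuclideanSpace ℝ ι) : ℝ :=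
  (∑ j, sqApprox m (x j + x' j)) / 2 - 1

lemma innerApprox_eq_sum {ι : Type*} [Fintype ι] (m : ℕ) (x x' : EuclideanSpace ℝ ι) :
    innerApprox m x x' = ∑ jkσ : ι × Fin m × Bool, interpWeight (· ^ 2) 0 2 m jkσ.2.1 / 2 *
      max 0 ((if jkσ.2.2 then x jkσ.1 + x' jkσ.1 else -(x jkσ.1 + x' jkσ.1)) -
        interpKnot 0 2 m jkσ.2.1) - 1 := by
  simp only [innerApprox, sqApprox_eq_sum, Fintype.sum_prod_type, sum_div,
    ← Fin.sum_univ_eq_sum_range, mul_sum, div_mul_eq_mul_div]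

lemma abs_innerApprox_sub_inner_le {ι : Type*} [Fintype ι] {m : ℕ} (hm : 0 < m)
    {x x' : EuclideanSpace ℝ ι} (hx : ‖x‖ = 1) (hx' : ‖x'‖ = 1) :
    |innerApprox m x x' - ⟪x, x'⟫| ≤ 2 * Fintype.card ι / m := by
  have hnorm : ∑ j, (x j + x' j) ^ 2 = 2 + 2 * ⟪x, x'⟫ := by
    have := norm_add_sq_real x x'
    rw [EuclideanSpace.real_norm_sq_eq, hx, hx'] at this
    simp only [PiLp.add_apply, one_pow] at this
    linarith
  have hcoord : ∀ j, |x j + x' j| ≤ 2 := fun j => by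
    have h := PiLp.norm_apply_le x j
    have h' := PiLp.norm_apply_le x' j
    rw [Real.norm_eq_abs] at h h'
    linarith [abs_add_le (x j) (x' j)]
  have hdiff : innerApprox m x x' - ⟪x, x'⟫ =
      (∑ j, (sqApprox m (x j + x' j) - (x j + x' j) ^ 2)) / 2 := by
    rw [innerApprox, sum_sub_distrib, hnorm]; ring
  rw [hdiff, abs_div, abs_two]
  calc |∑ j, (sqApprox m (x j + x' j) - (x j + x' j) ^ 2)| / 2
      ≤ (∑ _j : ι, (4 : ℝ) / m) / 2 := by
        gcongr
        exact (abs_sum_le_sum_abs _ _).trans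
          (sum_le_sum fun j _ => abs_sqApprox_sub_sq_le hm (hcoord j))
    _ = 2 * Fintype.card ι / m := by rw [sum_const, card_univ, nsmul_eq_mul]; ring

lemma sum_extend_zero_mul {ι κ : Type*} [Fintype ι] [Fintype κ] (e : ι ↪ κ) (g : ι → ℝ)
    (h : κ → ℝ) : ∑ i, Function.extend e g 0 i * h i = ∑ a, g a * h (e a) :=
  (Fintype.sum_of_injective e e.injective _ _
    (fun i hi => by rw [Function.extend_apply' _ _ _ (by simpa using hi), Pi.zero_apply, zero_mul])
    fun a => by rw [e.injective.extend_apply]).symm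

lemma abs_extend_zero_le {ι κ : Type*} {e : ι → κ} {g : ι → ℝ} {B : ℝ} (hB : 0 ≤ B)
    (hg : ∀ a, |g a| ≤ B) (i : κ) : |Function.extend e g 0 i| ≤ B := by
  classical
  rw [Function.extend_def]
  split_ifs
  · exact hg _
  · rwa [Pi.zero_apply, abs_zero]

-- The neurons are embedded into `Fin r` and the others get zero weights on both sides, so nothing
-- is needed of `σ 0`.
lemma isDepth3Net_of_fintype {ι κ : Type*} [Fintype ι] [Fintype κ] {d r : ℕ} {B : ℝ}
    {σ : ℝ → ℝ} {G : Sph d → Sph d → ℝ} (hι : Fintype.card ι ≤ r) (hκ : Fintype.card κ ≤ r)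
    (hB : 0 ≤ B) (W₁ W₁' : ι → Fin d → ℝ) (W₂ : κ → ι → ℝ) (w₃ b₂ : κ → ℝ) (b₁ : ι → ℝ)
    (b₃ : ℝ) (hW₁ : ∀ j k, |W₁ j k| ≤ B) (hW₁' : ∀ j k, |W₁' j k| ≤ B)
    (hW₂ : ∀ i j, |W₂ i j| ≤ B) (hw₃ : ∀ i, |w₃ i| ≤ B) (hb₁ : ∀ j, |b₁ j| ≤ B)
    (hb₂ : ∀ i, |b₂ i| ≤ B) (hb₃ : |b₃| ≤ B)
    (hG : ∀ x x' : Sph d, G x x' =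
      (∑ i, w₃ i * σ ((∑ j, W₂ i j * σ ((∑ k, W₁ j k * (x : EuclideanSpace ℝ (Fin d)) k) +
        (∑ k, W₁' j k * (x' : EuclideanSpace ℝ (Fin d)) k) + b₁ j)) + b₂ i)) + b₃) :
    IsDepth3Net d r B σ G := by
  obtain ⟨e₁⟩ := Function.Embedding.nonempty_of_card_le (hι.trans (Fintype.card_fin r).ge)
  obtain ⟨e₂⟩ := Function.Embedding.nonempty_of_card_le (hκ.trans (Fintype.card_fin r).ge)
  refine ⟨fun j k => Function.extend e₁ (W₁ · k) 0 j, fun j k => Function.extend e₁ (W₁' · k) 0 j,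
    fun i j => Function.extend e₂ (fun a => Function.extend e₁ (W₂ a) 0 j) 0 i,
    Function.extend e₂ w₃ 0, Function.extend e₁ b₁ 0, Function.extend e₂ b₂ 0, b₃,
    fun j k => abs_extend_zero_le hB (hW₁ · k) j, fun j k => abs_extend_zero_le hB (hW₁' · k) j,
    fun i j => abs_extend_zero_le hB (fun a => abs_extend_zero_le hB (hW₂ a) j) i,
    abs_extend_zero_le hB hw₃, abs_extend_zero_le hB hb₁, abs_extend_zero_le hB hb₂, hb₃,
    fun x x' => ?_⟩
  simp only [hG, sum_extend_zero_mul, e₁.injective.extend_apply, e₂.injective.extend_apply]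

-- First hidden layer: neuron `(j, k, σ)` computes `±(x_j + x'_j) - 2 k / m`; second hidden layer:
-- neuron `i` computes `innerApprox m x x' - interpKnot (-1) 1 n i`.
lemma isDepth3Net_reluInterp_innerApprox {d m n r : ℕ} {B L : ℝ} {f : ℝ → ℝ} (hm : 0 < m)
    (hn : 0 < n) (hmr : 2 * d * m ≤ r) (hnr : n ≤ r) (hB : 4 ≤ B) (hLB : 2 * L ≤ B)
    (hf : ∀ x ∈ Set.Icc (-1 : ℝ) 1, ∀ y ∈ Set.Icc (-1 : ℝ) 1, |f x - f y| ≤ L * |x - y|)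
    (hf₁ : |f (-1)| ≤ B) :
    IsDepth3Net d r B (fun x => max 0 x) fun x x' =>
      reluInterp f (-1) 1 n (innerApprox m (x : EuclideanSpace ℝ (Fin d)) x') := by
  refine isDepth3Net_of_fintype (ι := Fin d × Fin m × Bool) (κ := Fin n) (by simp; linarith)
    (by simpa using hnr) (by linarith)
    (fun jkσ l => if l = jkσ.1 then (if jkσ.2.2 then 1 else -1) else 0)
    (fun jkσ l => if l = jkσ.1 then (if jkσ.2.2 then 1 else -1) else 0)
    (fun _ jkσ => interpWeight (· ^ 2) 0 2 m jkσ.2.1 / 2)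
    (fun i => interpWeight f (-1) 1 n i) (fun i => -1 - interpKnot (-1) 1 n i)
    (fun jkσ => -interpKnot 0 2 m jkσ.2.1) (f (-1)) ?_ ?_ ?_ ?_ ?_ ?_ hf₁ ?_
  iterate 2
    · intro jkσ l
      split_ifs <;> norm_num <;> linarith
  · rintro - ⟨-, k, -⟩
    have := abs_interpWeight_le (g := (· ^ 2)) two_pos hm
      (fun x hx y hy => abs_sq_sub_sq_le hx hy) k.2
    rw [abs_div, abs_two]; linarith
  · exact fun i => (abs_interpWeight_le (by norm_num) hn hf i.2).trans hLB
  · rintro ⟨-, k, -⟩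
    have := interpKnot_mem (a := (0 : ℝ)) (b := 2) zero_le_two hm k.2.le
    rw [abs_neg, abs_le]; constructor <;> linarith [this.1, this.2]
  · intro i
    have := interpKnot_mem (a := (-1 : ℝ)) (b := 1) (by norm_num) hn i.2.le
    rw [abs_le]; constructor <;> linarith [this.1, this.2]
  · intro x x'
    set y := (x : EuclideanSpace ℝ (Fin d))
    set y' := (x' : EuclideanSpace ℝ (Fin d))
    have hlayer₁ : ∀ (j : Fin d) (k : Fin m) (σ : Bool),
        (∑ l, (if l = j then (if σ then 1 else -1) else 0) * y l) +
          (∑ l, (if l = j then (if σ then 1 else -1) else 0) * y' l) + -interpKnot 0 2 m k =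
        (if σ then y j + y' j else -(y j + y' j)) - interpKnot 0 2 m k := by
      intro j k σ
      cases σ <;> simp <;> ring
    simp only [hlayer₁, reluInterp, ← Fin.sum_univ_eq_sum_range, innerApprox_eq_sum]
    rw [add_comm]
    congr! 4 with i
    ring

lemma isDepth3Net_const {d r : ℕ} {B c : ℝ} (σ : ℝ → ℝ) (hc : |c| ≤ B) :
    IsDepth3Net d r B σ fun _ _ => c :=
  isDepth3Net_of_fintype (ι := Empty) (κ := Empty) (by simp) (by simp)
    ((abs_nonneg c).trans hc) 0 0 0 0 0 0 c (fun j => j.elim) (fun j => j.elim)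
    (fun i => i.elim) (fun i => i.elim) (fun j => j.elim) (fun i => i.elim) hc (by simp)

lemma abs_sub_reluInterp_innerApprox_le {ι : Type*} [Fintype ι] {m n : ℕ} (hm : 0 < m)
    (hn : 0 < n) {L : ℝ} {f : ℝ → ℝ}
    (hf : ∀ x ∈ Set.Icc (-1 : ℝ) 1, ∀ y ∈ Set.Icc (-1 : ℝ) 1, |f x - f y| ≤ L * |x - y|)
    {x x' : EuclideanSpace ℝ ι} (hx : ‖x‖ = 1) (hx' : ‖x'‖ = 1) :
    |f ⟪x, x'⟫ - reluInterp f (-1) 1 n (innerApprox m x x')| ≤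
      L / n + L * (2 * Fintype.card ι / m) := by
  have hL : 0 ≤ L := (abs_nonneg _).trans (abs_interpSlope_le (by norm_num) hn hf hn)
  rw [abs_sub_comm]
  calc _ ≤ L * ((1 - -1) / n) / 2 + L * |innerApprox m x x' - ⟪x, x'⟫| :=
        abs_reluInterp_sub_le (by norm_num) hn hf _ (real_inner_mem_Icc_of_norm_eq_one hx hx')
    _ ≤ L * ((1 - -1) / n) / 2 + L * (2 * Fintype.card ι / m) := by
        gcongr; exact abs_innerApprox_sub_inner_le hm hx hx'
    _ = L / n + L * (2 * Fintype.card ι / m) := by ring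

lemma abs_apply_inner_sub_apply_zero_le {E : Type*} [NormedAddCommGroup E]
    [InnerProductSpace ℝ E] {L : ℝ} (hL : 0 ≤ L) {f : ℝ → ℝ}
    (hf : ∀ x ∈ Set.Icc (-1 : ℝ) 1, ∀ y ∈ Set.Icc (-1 : ℝ) 1, |f x - f y| ≤ L * |x - y|)
    {x x' : E} (hx : ‖x‖ = 1) (hx' : ‖x'‖ = 1) : |f ⟪x, x'⟫ - f 0| ≤ L := by
  have hmem := real_inner_mem_Icc_of_norm_eq_one hx hx'
  calc _ ≤ L * |⟪x, x'⟫ - 0| := hf _ hmem 0 (by norm_num)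
    _ ≤ L * 1 := by gcongr; rw [sub_zero, abs_le]; exact hmem
    _ = L := mul_one L

lemma div_natCeil_div_le {c δ : ℝ} (hc : 0 < c) (hδ : 0 < δ) : c / ⌈c / δ⌉₊ ≤ δ := by
  rw [div_le_iff₀ (Nat.cast_pos.2 (Nat.ceil_pos.2 (div_pos hc hδ))), ← div_le_iff₀' hδ]
  exact Nat.le_ceil _

lemma natCast_max_ceil_le {d : ℕ} {L ε : ℝ} (hd : 1 ≤ d) (hε : 0 < ε) (hεL : ε < L) :
    ((max (2 * d * ⌈2 * d * L / (ε / 2)⌉₊) ⌈L / (ε / 2)⌉₊ : ℕ) : ℝ) ≤ 16 * d ^ 2 * L / ε := by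
  have hq : 1 < L / ε := (one_lt_div hε).2 hεL
  have hd' : (1 : ℝ) ≤ d := by exact_mod_cast hd
  rw [show 2 * d * L / (ε / 2) = 4 * d * (L / ε) by ring, show L / (ε / 2) = 2 * (L / ε) by ring,
    mul_div_assoc]
  have hm := Nat.ceil_lt_add_one (by positivity : 0 ≤ 4 * (d : ℝ) * (L / ε))
  have hn := Nat.ceil_lt_add_one (by positivity : 0 ≤ 2 * (L / ε))
  rw [Nat.cast_max, max_le_iff]
  push_cast
  constructor <;> nlinarith

/-- Any inner product function `F(x,x') = f(⟨x,x'⟩)` with `f : [-1,1] → [-1,1]`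
`L`-Lipschitz can be uniformly `ε`-approximated by a depth-3 ReLU network of width at most
`16 d² L / ε` with weights bounded by `max 4 (2L)`. -/
theorem depth_three_approximates_inner_product
    (d : ℕ) (hd : 2 ≤ d) (L ε : ℝ) (hL : 0 < L) (hε : 0 < ε) (f : ℝ → ℝ)
    (hmap : ∀ x ∈ Set.Icc (-1 : ℝ) 1, f x ∈ Set.Icc (-1 : ℝ) 1)
    (hlip : ∀ x ∈ Set.Icc (-1 : ℝ) 1, ∀ y ∈ Set.Icc (-1 : ℝ) 1, |f x - f y| ≤ L * |x - y|) :
    ∃ (r : ℕ) (G : Sph d → Sph d → ℝ), (r : ℝ) ≤ 16 * d ^ 2 * L / ε ∧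
      IsDepth3Net d r (max 4 (2 * L)) (fun x => max 0 x) G ∧
      ∀ x x' : Sph d,
        |f ⟪(x : EuclideanSpace ℝ (Fin d)), (x' : EuclideanSpace ℝ (Fin d))⟫ - G x x'| ≤ ε := by
  have hfB : ∀ t ∈ Set.Icc (-1 : ℝ) 1, |f t| ≤ max 4 (2 * L) := fun t ht =>
    (abs_le.2 (hmap t ht)).trans (by linarith [le_max_left 4 (2 * L)])
  have hunit : ∀ x : Sph d, ‖(x : EuclideanSpace ℝ (Fin d))‖ = 1 := fun x => by simp
  rcases le_or_gt L ε with hLε | hεL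
  · exact ⟨0, fun _ _ => f 0, by simp; positivity, isDepth3Net_const _ (hfB 0 (by norm_num)),
      fun x x' => (abs_apply_inner_sub_apply_zero_le hL.le hlip (hunit x) (hunit x')).trans hLε⟩
  set n := ⌈L / (ε / 2)⌉₊
  set m := ⌈2 * d * L / (ε / 2)⌉₊
  have hn : 0 < n := Nat.ceil_pos.2 (by positivity)
  have hm : 0 < m := Nat.ceil_pos.2 (by positivity)
  refine ⟨max (2 * d * m) n, _, natCast_max_ceil_le (by omega) hε hεL,
    isDepth3Net_reluInterp_innerApprox hm hn (le_max_left _ _) (le_max_right _ _)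
      (le_max_left _ _) (le_max_right _ _) hlip (hfB _ (by norm_num)), fun x x' => ?_⟩
  calc _ ≤ L / n + L * (2 * Fintype.card (Fin d) / m) :=
        abs_sub_reluInterp_innerApprox_le hm hn hlip (hunit x) (hunit x')
    _ = L / n + 2 * d * L / m := by rw [Fintype.card_fin]; ring
    _ ≤ ε / 2 + ε / 2 := add_le_add (div_natCeil_div_le hL (half_pos hε))
        (div_natCeil_div_le (by positivity) (half_pos hε))
    _ = ε := add_halves ε
end

section
/- Let m be a positive integer, let k be a nonnegative integer with k ≤ m, and let q : ℝ → ℝ be a real polynomial of degree at most k. Then ∫_{−1}^{1} ( sin(π m x) − q(x) )² dx ≥ (m − k)/(2m), where the integral is with respect to Lebesgue measure. -/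
/-!
Cut `[-1, 1]` into the `m` periods `[(2i - m)/m, (2i - m + 2)/m]` of `sin (π m x)`. A
polynomial of degree at most `k` changes sign on at most `k` of them, since each sign change
gives a distinct root. On a period where `q` keeps its sign, `sin (π m x)` has the opposite sign
on one of the two half periods, so there `(sin (π m x) - q x)² ≥ sin² (π m x)`, whose integral
over a half period is `1 / (2m)`. The remaining `m - k` periods contribute at least
`(m - k) / (2m)`.
-/

open MeasureTheory Real Set Finset Polynomial

def HasConstSignOn (f : ℝ → ℝ) (s : Set ℝ) : Prop :=
  (∀ x ∈ s, 0 ≤ f x) ∨ ∀ x ∈ s, f x ≤ 0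

theorem IsPreconnected.exists_eq_zero_of_not_hasConstSignOn {f : ℝ → ℝ} {s : Set ℝ}
    (hs : IsPreconnected s) (hf : ContinuousOn f s) (h : ¬HasConstSignOn f s) :
    ∃ z ∈ s, f z = 0 := by
  simp only [HasConstSignOn, not_or, not_forall, not_le] at h
  obtain ⟨⟨x, hx, hfx⟩, ⟨y, hy, hfy⟩⟩ := h
  exact hs.intermediate_value hx hy hf ⟨hfx.le, hfy.le⟩

theorem Polynomial.card_le_natDegree_of_not_hasConstSignOn (q : ℝ[X]) {a : ℕ → ℝ}
    (ha : Monotone a) {s : Finset ℕ}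
    (hs : ∀ i ∈ s, ¬HasConstSignOn q.eval (Ioo (a i) (a (i + 1)))) : #s ≤ q.natDegree := by
  by_cases hq : q = 0
  · have : s = ∅ := eq_empty_of_forall_notMem fun i hi =>
      hs i hi (Or.inl fun x _ => by simp [hq])
    simp [this]
  have hroot (i : ℕ) (hi : i ∈ s) : ∃ z ∈ Ioo (a i) (a (i + 1)), q.IsRoot z :=
    isPreconnected_Ioo.exists_eq_zero_of_not_hasConstSignOn q.continuousOn (hs i hi)
  choose! z hz hzq using hroot
  classical
  calc #s ≤ #q.roots.toFinset := by
        refine card_le_card_of_injOn z (fun i hi => ?_) fun i hi j hj hij => ?_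
        · simpa [hq] using hzq i hi
        · by_contra hne
          exact Set.disjoint_left.mp (ha.pairwise_disjoint_on_Ioo_succ hne) (hz i hi)
            (hij ▸ hz j hj)
    _ ≤ q.natDegree := (Multiset.toFinset_card_le _).trans q.card_roots'

open Classical in
theorem Polynomial.sub_natDegree_le_card_filter_hasConstSignOn (q : ℝ[X]) {a : ℕ → ℝ}
    (ha : Monotone a) (n : ℕ) :
    n - q.natDegree ≤ #{i ∈ range n | HasConstSignOn q.eval (Ioo (a i) (a (i + 1)))} := by
  have hbad := q.card_le_natDegree_of_not_hasConstSignOn ha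
    (s := {i ∈ range n | ¬HasConstSignOn q.eval (Ioo (a i) (a (i + 1)))})
    fun i hi => (mem_filter.1 hi).2
  have hsplit := card_filter_add_card_filter_not (s := range n)
    fun i => HasConstSignOn q.eval (Ioo (a i) (a (i + 1)))
  rw [card_range] at hsplit
  omega

theorem card_mul_le_integral_of_le_integral_piece {f : ℝ → ℝ} {a : ℕ → ℝ} {n : ℕ}
    {s : Finset ℕ} {b : ℝ} (ha : Monotone a) (hf : 0 ≤ f)
    (hfi : ∀ i < n, IntervalIntegrable f volume (a i) (a (i + 1))) (hs : s ⊆ range n)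
    (hb : ∀ i ∈ s, b ≤ ∫ x in a i..a (i + 1), f x) :
    #s * b ≤ ∫ x in a 0..a n, f x :=
  calc #s * b = ∑ i ∈ s, b := by rw [sum_const, nsmul_eq_mul]
    _ ≤ ∑ i ∈ s, ∫ x in a i..a (i + 1), f x := sum_le_sum hb
    _ ≤ ∑ i ∈ range n, ∫ x in a i..a (i + 1), f x :=
        sum_le_sum_of_subset_of_nonneg hs fun i _ _ =>
          intervalIntegral.integral_nonneg (ha i.le_succ) fun x _ => hf x
    _ = ∫ x in a 0..a n, f x := intervalIntegral.sum_integral_adjacent_intervals hfi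

theorem integral_sq_le_integral_sub_sq_of_mul_nonpos {f g : ℝ → ℝ} {a b : ℝ} (hab : a ≤ b)
    (hf : IntervalIntegrable (fun x => f x ^ 2) volume a b)
    (hfg : IntervalIntegrable (fun x => (f x - g x) ^ 2) volume a b)
    (h : ∀ x ∈ Ioo a b, f x * g x ≤ 0) :
    ∫ x in a..b, f x ^ 2 ≤ ∫ x in a..b, (f x - g x) ^ 2 :=
  intervalIntegral.integral_mono_on_of_le_Ioo hab hf hfg fun x hx => by
    nlinarith [h x hx, sq_nonneg (g x)]

theorem integral_sin_sq_half_period {c : ℝ} (hc : c ≠ 0) (j : ℤ) :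
    ∫ x in j / c..(j + 1) / c, sin (π * c * x) ^ 2 = 1 / (2 * c) := by
  have hπc : π * c ≠ 0 := mul_ne_zero pi_ne_zero hc
  rw [intervalIntegral.integral_comp_mul_left (fun y => sin y ^ 2) hπc, integral_sin_sq]
  have h₀ : π * c * (j / c) = j * π := by field_simp
  have h₁ : π * c * ((j + 1) / c) = ((j + 1 : ℤ) : ℝ) * π := by push_cast; field_simp
  rw [h₀, h₁, sin_int_mul_pi, sin_int_mul_pi, smul_eq_mul]
  push_cast
  field_simp
  ring

theorem neg_one_zpow_mul_sin_nonneg {c : ℝ} (hc : 0 < c) (j : ℤ) {x : ℝ}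
    (hx : x ∈ Icc (j / c) ((j + 1) / c)) : 0 ≤ (-1) ^ j * sin (π * c * x) := by
  have h₀ : j * π ≤ π * c * x := by
    have := (div_le_iff₀ hc).1 hx.1
    nlinarith [pi_pos]
  have h₁ : π * c * x ≤ (j + 1) * π := by
    have := (le_div_iff₀ hc).1 hx.2
    nlinarith [pi_pos]
  have hsin : sin (π * c * x) = (-1) ^ j * sin (π * c * x - j * π) := by
    rw [← sin_add_int_mul_pi, sub_add_cancel]
  rw [hsin, ← mul_assoc, ← mul_zpow, neg_one_mul, neg_neg, one_zpow, one_mul]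
  exact sin_nonneg_of_nonneg_of_le_pi (by linarith) (by linarith)

theorem HasConstSignOn.exists_neg_one_zpow_mul_nonpos {g : ℝ → ℝ} {s : Set ℝ}
    (hg : HasConstSignOn g s) (n : ℤ) :
    ∃ j, (j = n ∨ j = n + 1) ∧ ∀ x ∈ s, (-1 : ℝ) ^ j * g x ≤ 0 := by
  rcases hg with hg | hg <;> rcases Int.even_or_odd n with hn | hn
  · exact ⟨n + 1, .inr rfl, fun x hx => by simp [hn.add_one.neg_one_zpow, hg x hx]⟩
  · exact ⟨n, .inl rfl, fun x hx => by simp [hn.neg_one_zpow, hg x hx]⟩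
  · exact ⟨n, .inl rfl, fun x hx => by simp [hn.neg_one_zpow, hg x hx]⟩
  · exact ⟨n + 1, .inr rfl, fun x hx => by simp [hn.add_one.neg_one_zpow, hg x hx]⟩

theorem one_div_two_mul_le_integral_sin_sub_sq_half_period {c : ℝ} (hc : 0 < c) (j : ℤ)
    {g : ℝ → ℝ} (hg : Continuous g)
    (hgj : ∀ x ∈ Ioo (j / c) ((j + 1) / c), (-1 : ℝ) ^ j * g x ≤ 0) :
    1 / (2 * c) ≤ ∫ x in j / c..(j + 1) / c, (sin (π * c * x) - g x) ^ 2 := by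
  rw [← integral_sin_sq_half_period hc.ne' j]
  refine integral_sq_le_integral_sub_sq_of_mul_nonpos
    (div_le_div_of_nonneg_right (by linarith) hc.le)
    ((by fun_prop : Continuous _).intervalIntegrable _ _)
    ((by fun_prop : Continuous _).intervalIntegrable _ _) fun x hx => ?_
  have hsin := neg_one_zpow_mul_sin_nonneg hc j (Ioo_subset_Icc_self hx)
  calc sin (π * c * x) * g x
      = ((-1) ^ j * sin (π * c * x)) * ((-1) ^ j * g x) := by
        rw [mul_mul_mul_comm, ← mul_zpow, neg_one_mul, neg_neg, one_zpow, one_mul]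
    _ ≤ 0 := mul_nonpos_of_nonneg_of_nonpos hsin (hgj x hx)

theorem one_div_two_mul_le_integral_sin_sub_sq_period {c : ℝ} (hc : 0 < c) (n : ℤ)
    {g : ℝ → ℝ} (hg : Continuous g) (hsign : HasConstSignOn g (Ioo (n / c) ((n + 2) / c))) :
    1 / (2 * c) ≤ ∫ x in n / c..(n + 2) / c, (sin (π * c * x) - g x) ^ 2 := by
  obtain ⟨j, hj, hgj⟩ := hsign.exists_neg_one_zpow_mul_nonpos n
  have hn : (n : ℝ) ≤ j ∧ (j : ℝ) + 1 ≤ n + 2 := by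
    rcases hj with rfl | rfl <;> push_cast <;> constructor <;> linarith
  have hsub : Ioo (j / c) ((j + 1) / c) ⊆ Ioo (n / c) ((n + 2) / c) :=
    Ioo_subset_Ioo (div_le_div_of_nonneg_right hn.1 hc.le)
      (div_le_div_of_nonneg_right hn.2 hc.le)
  calc 1 / (2 * c) ≤ ∫ x in j / c..(j + 1) / c, (sin (π * c * x) - g x) ^ 2 :=
        one_div_two_mul_le_integral_sin_sub_sq_half_period hc j hg fun x hx => hgj x (hsub hx)
    _ ≤ ∫ x in n / c..(n + 2) / c, (sin (π * c * x) - g x) ^ 2 :=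
        intervalIntegral.integral_mono_interval (div_le_div_of_nonneg_right hn.1 hc.le)
          (div_le_div_of_nonneg_right (by linarith) hc.le)
          (div_le_div_of_nonneg_right hn.2 hc.le)
          (.of_forall fun x => sq_nonneg _)
          ((by fun_prop : Continuous _).intervalIntegrable _ _)

theorem sine_far_from_polynomials_lebesgue_general
    (m k : ℕ) (hm : 0 < m) (q : Polynomial ℝ) (hq : q.natDegree ≤ k) :
    (∫ x in Set.Icc (-1 : ℝ) 1, (Real.sin (π * m * x) - q.eval x) ^ 2) ≥
      ((m : ℝ) - k) / (2 * m) := by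
  classical
  have hm' : (0 : ℝ) < m := by exact_mod_cast hm
  set n : ℕ → ℤ := fun i => 2 * i - m
  set a : ℕ → ℝ := fun i => n i / m
  have ha : Monotone a := fun i j hij => by simp only [a, n]; push_cast; gcongr
  have ha_succ (i : ℕ) : a (i + 1) = (n i + 2) / m := by simp only [a, n]; push_cast; ring
  have ha₀ : a 0 = -1 := by simp [a, n, hm'.ne']
  have ha_m : a m = 1 := by simp only [a, n]; push_cast; field_simp; ring
  set good := {i ∈ range m | HasConstSignOn q.eval (Ioo (a i) (a (i + 1)))}
  have hgood : (m : ℝ) - k ≤ #good := by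
    have := q.sub_natDegree_le_card_filter_hasConstSignOn ha m
    change m - q.natDegree ≤ #good at this
    exact sub_le_iff_le_add.2 (by exact_mod_cast (show m ≤ #good + k by omega))
  have hcont : Continuous fun x : ℝ => (sin (π * m * x) - q.eval x) ^ 2 := by fun_prop
  rw [ge_iff_le, integral_Icc_eq_integral_Ioc, ← intervalIntegral.integral_of_le (by norm_num),
    ← ha₀, ← ha_m]
  calc ((m : ℝ) - k) / (2 * m) ≤ #good * (1 / (2 * m)) := by rw [mul_one_div]; gcongr
    _ ≤ _ := card_mul_le_integral_of_le_integral_piece ha (fun x => sq_nonneg _)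
        (fun i _ => hcont.intervalIntegrable _ _) (filter_subset _ _) fun i hi => by
        have hsign := (mem_filter.1 hi).2
        rw [ha_succ] at hsign ⊢
        exact one_div_two_mul_le_integral_sin_sub_sq_period hm' (n i) q.continuous hsign

/-- For `k ≤ m`, every polynomial of degree at most `k` is far from
`x ↦ sin(π m x)` in `L²([-1,1])`: `∫_{-1}^{1} (sin(π m x) - q(x))² dx ≥ (m-k)/(2m)`. -/
theorem sine_far_from_polynomials_lebesgue
    (m k : ℕ) (hm : 0 < m) (hk : k ≤ m) (q : Polynomial ℝ) (hq : q.natDegree ≤ k) :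
    (∫ x in Set.Icc (-1 : ℝ) 1, (Real.sin (π * m * x) - q.eval x) ^ 2) ≥
      ((m : ℝ) - k) / (2 * m) :=
  sine_far_from_polynomials_lebesgue_general m k hm q hq
end
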